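/- arXiv:1808.10352 — 11 statements merged into one kernel-verified Lean document; each statement's English description precedes it below -/
import Mathlib

section
/- Let A be a finite set with |A| ≥ 2, n a positive integer, η > 0, and ⟨D_t : t ∈ A^n⟩ a stochastic process in a probability space (Ω, F, P) that is η-stationary with respect to combinatorial lines. Then for every pair of disjoint subsets Γ₁, Γ₂ of A and every pair v₁, v₂ of variable words over A of length n, we have |P(⋂_{α∈Γ₁} D_{v₁(α)} ∩ ⋂_{α∈Γ₂} D_{v₁(α)}ᶜ) − P(⋂_{α∈Γ₁} D_{v₂(α)} ∩ ⋂_{α∈Γ₂} D_{v₂(α)}ᶜ)| ≤ 2^{|Γ₂|} η. -/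
open MeasureTheory

/-- Substitution of a letter for the variable in a variable word. -/
def wsubst {A : Type*} {n : ℕ} (v : Fin n → Option A) (α : A) : Fin n → A :=
  fun i => (v i).getD α

/-- A variable word over `A` of length `n`: the variable (`none`) appears at least once. -/
def IsVarWord {A : Type*} {n : ℕ} (v : Fin n → Option A) : Prop := ∃ i, v i = none

/-- η-stationarity with respect to combinatorial lines. -/
def StationaryLines {A Ω : Type*} [MeasurableSpace Ω] {n : ℕ}
    (P : Measure Ω) (D : (Fin n → A) → Set Ω) (η : ℝ) : Prop :=
  ∀ Γ : Finset A, Γ.Nonempty → ∀ v₁ v₂ : Fin n → Option A, IsVarWord v₁ → IsVarWord v₂ →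
    |(P (⋂ α ∈ Γ, D (wsubst v₁ α))).toReal - (P (⋂ α ∈ Γ, D (wsubst v₂ α))).toReal| ≤ η

lemma split_lemma {Ω : Type*} [MeasurableSpace Ω] (P : Measure Ω) [IsProbabilityMeasure P]
    (X Y B : Set Ω) (hX : MeasurableSet X) (hY : MeasurableSet Y) (hB : MeasurableSet B) :
    (P (X ∩ (Bᶜ ∩ Y))).toReal = (P (X ∩ Y)).toReal - (P ((B ∩ X) ∩ Y)).toReal := by
  have hset : X ∩ Y = (X ∩ (Bᶜ ∩ Y)) ∪ ((B ∩ X) ∩ Y) := by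
    ext ω; by_cases hω : ω ∈ B <;> simp [hω] <;> tauto
  have hdisj : Disjoint (X ∩ (Bᶜ ∩ Y)) ((B ∩ X) ∩ Y) := by
    rw [Set.disjoint_left]; rintro ω ⟨_, hb, _⟩ ⟨⟨hb', _⟩, _⟩; exact hb hb'
  have := measure_union (μ := P) hdisj ((hB.inter hX).inter hY)
  rw [hset, this, ENNReal.toReal_add (measure_ne_top P _) (measure_ne_top P _)]
  ring

theorem stmt0 {A Ω : Type*} [Fintype A] [MeasurableSpace Ω]
    (hA : 2 ≤ Fintype.card A) {n : ℕ} (hn : 0 < n)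
    (P : Measure Ω) [IsProbabilityMeasure P] (η : ℝ) (hη : 0 < η)
    (D : (Fin n → A) → Set Ω) (hmeas : ∀ t, MeasurableSet (D t))
    (hstat : StationaryLines P D η) :
    ∀ Γ₁ Γ₂ : Finset A, Disjoint Γ₁ Γ₂ →
      ∀ v₁ v₂ : Fin n → Option A, IsVarWord v₁ → IsVarWord v₂ →
      |(P ((⋂ α ∈ Γ₁, D (wsubst v₁ α)) ∩ ⋂ α ∈ Γ₂, (D (wsubst v₁ α))ᶜ)).toReal -
        (P ((⋂ α ∈ Γ₁, D (wsubst v₂ α)) ∩ ⋂ α ∈ Γ₂, (D (wsubst v₂ α))ᶜ)).toReal| ≤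
        2 ^ Γ₂.card * η := by
  classical
  intro Γ₁ Γ₂
  induction Γ₂ using Finset.induction generalizing Γ₁ with
  | empty =>
    intro _ v₁ v₂ hv₁ hv₂
    simp only [Finset.card_empty, pow_zero, one_mul, Finset.notMem_empty,
      Set.iInter_of_empty, Set.iInter_univ, Set.inter_univ]
    rcases Γ₁.eq_empty_or_nonempty with rfl | hne
    · simp [measure_univ]; linarith
    · exact hstat Γ₁ hne v₁ v₂ hv₁ hv₂
  | @insert a s ha IH =>
    intro hdisj v₁ v₂ hv₁ hv₂
    have hdisj' : Disjoint Γ₁ s := hdisj.mono_right (Finset.subset_insert a s)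
    have haΓ : a ∉ Γ₁ := fun h => (Finset.disjoint_left.mp hdisj h (Finset.mem_insert_self a s))
    have hdisj'' : Disjoint (insert a Γ₁) s := by
      rw [Finset.disjoint_left]
      intro b hb hbs
      rcases Finset.mem_insert.mp hb with rfl | hb'
      · exact ha hbs
      · exact Finset.disjoint_left.mp hdisj' hb' hbs
    have hXm : ∀ v : Fin n → Option A, ∀ Γ : Finset A,
        MeasurableSet (⋂ α ∈ Γ, D (wsubst v α)) := fun v Γ =>
      Finset.measurableSet_biInter Γ (fun b _ => hmeas _)
    have hYm : ∀ v : Fin n → Option A,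
        MeasurableSet (⋂ α ∈ s, (D (wsubst v α))ᶜ) := fun v =>
      Finset.measurableSet_biInter s (fun b _ => (hmeas _).compl)
    have key : ∀ v : Fin n → Option A,
        (P ((⋂ α ∈ Γ₁, D (wsubst v α)) ∩ ⋂ α ∈ insert a s, (D (wsubst v α))ᶜ)).toReal =
        (P ((⋂ α ∈ Γ₁, D (wsubst v α)) ∩ ⋂ α ∈ s, (D (wsubst v α))ᶜ)).toReal -
        (P ((⋂ α ∈ insert a Γ₁, D (wsubst v α)) ∩ ⋂ α ∈ s, (D (wsubst v α))ᶜ)).toReal := by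
      intro v
      rw [Finset.set_biInter_insert (t := fun α => (D (wsubst v α))ᶜ),
        Finset.set_biInter_insert (t := fun α => D (wsubst v α))]
      exact split_lemma P _ _ _ (hXm v Γ₁) (hYm v) (hmeas _)
    rw [key v₁, key v₂]
    have h1 := IH Γ₁ hdisj' v₁ v₂ hv₁ hv₂
    have h2 := IH (insert a Γ₁) hdisj'' v₁ v₂ hv₁ hv₂
    rw [Finset.card_insert_of_notMem ha]
    have : (2:ℝ) ^ (s.card + 1) * η = 2 ^ s.card * η + 2 ^ s.card * η := by ring
    rw [this]
    have heq : ∀ p1 q1 p2 q2 : ℝ, (p1 - q1) - (p2 - q2) = (p1 - p2) - (q1 - q2) := by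
      intros; ring
    rw [heq]
    exact le_trans (abs_sub _ _) (add_le_add h1 h2)
end

section
/- Let A be a finite set with |A| ≥ 2, let n be a positive integer, let ε, η ∈ (0,1], let ⟨D_t : t ∈ A^n⟩ be an η-stationary (with respect to combinatorial lines) stochastic process with |P(D_t) − ε| ≤ η for all t, let Γ ⊆ A be nonempty, and let θ ≥ η. Then at least one of the following holds: (i) the process is (Γ, θ)-pseudorandom; (ii) the process is (Γ, θ − η)-supercorrelated; (iii) the process is (Γ, θ − η)-subcorrelated. -/
open MeasureTheory

/-- (Γ, θ)-pseudorandomness. -/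
def Pseudorandom {A Ω : Type*} [MeasurableSpace Ω] {n : ℕ}
    (P : Measure Ω) (D : (Fin n → A) → Set Ω) (ε : ℝ) (Γ : Finset A) (θ : ℝ) : Prop :=
  ∀ v : Fin n → Option A, IsVarWord v →
    |(P (⋂ α ∈ Γ, D (wsubst v α))).toReal - ε ^ Γ.card| ≤ θ

/-- (Γ, θ)-supercorrelation. -/
def Supercorrelated {A Ω : Type*} [MeasurableSpace Ω] {n : ℕ}
    (P : Measure Ω) (D : (Fin n → A) → Set Ω) (ε : ℝ) (Γ : Finset A) (θ : ℝ) : Prop :=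
  ∀ v : Fin n → Option A, IsVarWord v →
    (P (⋂ α ∈ Γ, D (wsubst v α))).toReal ≥ ε ^ Γ.card + θ

/-- (Γ, θ)-subcorrelation. -/
def Subcorrelated {A Ω : Type*} [MeasurableSpace Ω] {n : ℕ}
    (P : Measure Ω) (D : (Fin n → A) → Set Ω) (ε : ℝ) (Γ : Finset A) (θ : ℝ) : Prop :=
  ∀ v : Fin n → Option A, IsVarWord v →
    (P (⋂ α ∈ Γ, D (wsubst v α))).toReal ≤ ε ^ Γ.card - θ

theorem stmt2 {A Ω : Type*} [Fintype A] [MeasurableSpace Ω]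
    (hA : 2 ≤ Fintype.card A) {n : ℕ} (hn : 0 < n)
    (P : Measure Ω) [IsProbabilityMeasure P] (ε η : ℝ)
    (hε : 0 < ε) (hε1 : ε ≤ 1) (hη : 0 < η) (hη1 : η ≤ 1)
    (D : (Fin n → A) → Set Ω) (hmeas : ∀ t, MeasurableSet (D t))
    (hstat : StationaryLines P D η) (hPD : ∀ t, |(P (D t)).toReal - ε| ≤ η)
    (Γ : Finset A) (hΓ : Γ.Nonempty) (θ : ℝ) (hθ : η ≤ θ) :
    Pseudorandom P D ε Γ θ ∨ Supercorrelated P D ε Γ (θ - η) ∨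
      Subcorrelated P D ε Γ (θ - η) := by
  by_cases hps : Pseudorandom P D ε Γ θ
  · exact Or.inl hps
  · simp only [Pseudorandom, not_forall] at hps
    obtain ⟨v₀, hv₀, hbad⟩ := hps
    rw [not_le, lt_abs] at hbad
    rcases hbad with h | h
    · refine Or.inr (Or.inl ?_)
      intro v hv
      have hs := hstat Γ hΓ v v₀ hv hv₀
      have := abs_le.mp hs
      linarith [this.1]
    · refine Or.inr (Or.inr ?_)
      intro v hv
      have hs := hstat Γ hΓ v v₀ hv hv₀
      have := abs_le.mp hs
      linarith [this.2]
end

section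
/- Let A be a finite set with |A| ≥ 2, n ≥ |A| an integer, ε, η ∈ (0,1], σ, θ ≥ 0, Γ ⊆ A nonempty, β ∈ A \ Γ, and let ⟨D_t : t ∈ A^n⟩ be an η-stationary process with |P(D_t) − ε| ≤ η for all t, which is (Γ, θ)-pseudorandom and (Γ ∪ {β}, σ)-supercorrelated. Set p := |Γ|, and for each t ∈ A^n define S_t := ⋂_{α∈Γ} D_{t^{β→α}}. Then for every t ∈ A^n which contains the letter β: |P(S_t) − ε^p| ≤ θ and P(D_t | S_t) ≥ ε(1 + (σε^{-1} − θ)/(ε^p + θ)). -/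
open MeasureTheory

/-- `t^{β→α}`: replace every appearance of `β` in `t` by `α`. -/
def replaceLetter {A : Type*} [DecidableEq A] {n : ℕ} (β α : A) (t : Fin n → A) : Fin n → A :=
  fun i => if t i = β then α else t i

theorem stmt3 {A Ω : Type*} [Fintype A] [DecidableEq A] [MeasurableSpace Ω]
    (hA : 2 ≤ Fintype.card A) {n : ℕ} (hn : Fintype.card A ≤ n)
    (P : Measure Ω) [IsProbabilityMeasure P] (ε η σ θ : ℝ)
    (hε : 0 < ε) (hε1 : ε ≤ 1) (hη : 0 < η) (hη1 : η ≤ 1) (hσ : 0 ≤ σ) (hθ : 0 ≤ θ)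
    (Γ : Finset A) (hΓ : Γ.Nonempty) (β : A) (hβ : β ∉ Γ)
    (D : (Fin n → A) → Set Ω) (hmeas : ∀ t, MeasurableSet (D t))
    (hstat : StationaryLines P D η) (hPD : ∀ t, |(P (D t)).toReal - ε| ≤ η)
    (hpseudo : Pseudorandom P D ε Γ θ)
    (hsuper : Supercorrelated P D ε (insert β Γ) σ)
    (S : (Fin n → A) → Set Ω)
    (hS : ∀ t, S t = ⋂ α ∈ Γ, D (replaceLetter β α t)) :
    ∀ t : Fin n → A, (∃ i, t i = β) →
      |(P (S t)).toReal - ε ^ Γ.card| ≤ θ ∧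
      (P (D t ∩ S t)).toReal / (P (S t)).toReal ≥
        ε * (1 + (σ * ε⁻¹ - θ) / (ε ^ Γ.card + θ)) := by

  intro t ⟨i, hi⟩
  set v : Fin n → Option A := fun j => if t j = β then none else some (t j) with hv
  have hvw : IsVarWord v := ⟨i, by simp [hv, hi]⟩
  have hw : ∀ α, wsubst v α = replaceLetter β α t := by
    intro α; funext j; simp only [wsubst, replaceLetter, hv]; split <;> simp
  have hwβ : wsubst v β = t := by
    funext j; simp only [wsubst, hv]; split <;> simp_all
  have hSt : S t = ⋂ α ∈ Γ, D (wsubst v α) := by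
    rw [hS t]; exact Set.iInter₂_congr (fun α _ => by rw [hw])
  have h1 : |(P (S t)).toReal - ε ^ Γ.card| ≤ θ := by
    rw [hSt]; exact hpseudo v hvw
  refine ⟨h1, ?_⟩
  have hDS : D t ∩ S t = ⋂ α ∈ insert β Γ, D (wsubst v α) := by
    rw [Finset.set_biInter_insert, hwβ, hSt]
  have ha : (P (D t ∩ S t)).toReal ≥ ε ^ (Γ.card + 1) + σ := by
    have := hsuper v hvw
    rwa [Finset.card_insert_of_notMem hβ, ← hDS] at this
  set a := (P (D t ∩ S t)).toReal
  set b := (P (S t)).toReal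
  have hab : a ≤ b :=
    ENNReal.toReal_mono (measure_ne_top _ _) (measure_mono Set.inter_subset_right)
  have hpos : (0:ℝ) < ε ^ (Γ.card + 1) + σ := by positivity
  have hbpos : 0 < b := lt_of_lt_of_le hpos (le_trans ha hab)
  have hble : b ≤ ε ^ Γ.card + θ := by
    have := (abs_le.mp h1).2; linarith
  have hdpos : (0:ℝ) < ε ^ Γ.card + θ := by positivity
  have key : ε * (1 + (σ * ε⁻¹ - θ) / (ε ^ Γ.card + θ)) =
      (ε ^ (Γ.card + 1) + σ) / (ε ^ Γ.card + θ) := by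
    field_simp
    ring
  rw [key]
  exact div_le_div₀ (le_trans hpos.le ha) ha hbpos hble
end

section
/- With the same setting as above but assuming the process ⟨D_t : t ∈ A^n⟩ is (Γ, θ)-pseudorandom and (Γ ∪ {β}, σ)-subcorrelated (instead of supercorrelated), for every t ∈ A^n containing β we have P(D_t | S_t) ≤ ε(1 − (σε^{-1} − θ)/(ε^p − θ)), where S_t := ⋂_{α∈Γ} D_{t^{β→α}} and p = |Γ|. -/
open MeasureTheory

theorem stmt4 {A Ω : Type*} [Fintype A] [DecidableEq A] [MeasurableSpace Ω]
    (hA : 2 ≤ Fintype.card A) {n : ℕ} (hn : Fintype.card A ≤ n)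
    (P : Measure Ω) [IsProbabilityMeasure P] (ε η σ θ : ℝ)
    (hε : 0 < ε) (hε1 : ε ≤ 1) (hη : 0 < η) (hη1 : η ≤ 1) (hσ : 0 ≤ σ) (hθ : 0 ≤ θ)
    (Γ : Finset A) (hΓ : Γ.Nonempty) (β : A) (hβ : β ∉ Γ)
    (D : (Fin n → A) → Set Ω) (hmeas : ∀ t, MeasurableSet (D t))
    (hstat : StationaryLines P D η) (hPD : ∀ t, |(P (D t)).toReal - ε| ≤ η)
    (hpseudo : Pseudorandom P D ε Γ θ)
    (hsub : Subcorrelated P D ε (insert β Γ) σ)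
    (hden : 0 < ε ^ Γ.card - θ)
    (S : (Fin n → A) → Set Ω)
    (hS : ∀ t, S t = ⋂ α ∈ Γ, D (replaceLetter β α t)) :
    ∀ t : Fin n → A, (∃ i, t i = β) →
      (P (D t ∩ S t)).toReal / (P (S t)).toReal ≤
        ε * (1 - (σ * ε⁻¹ - θ) / (ε ^ Γ.card - θ)) := by
  rintro t ⟨i, hti⟩
  set v : Fin n → Option A := fun j => if t j = β then none else some (t j) with hv
  have hvw : IsVarWord v := ⟨i, by simp [hv, hti]⟩
  have hsubβ : wsubst v β = t := by
    funext j; simp only [wsubst, hv]; split_ifs with h <;> simp [h]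
  have hsubα : ∀ α, wsubst v α = replaceLetter β α t := by
    intro α; funext j; simp only [wsubst, replaceLetter, hv]; split_ifs <;> simp
  have hSt : S t = ⋂ α ∈ Γ, D (wsubst v α) := by
    rw [hS]; exact Set.iInter₂_congr fun α _ => by rw [hsubα]
  have hDt : D t ∩ S t = ⋂ α ∈ insert β Γ, D (wsubst v α) := by
    rw [hSt, Finset.set_biInter_insert, hsubβ]
  have h1 := hsub v hvw
  rw [Finset.card_insert_of_notMem hβ, ← hDt] at h1
  have h2 := abs_le.mp (hpseudo v hvw)
  have hSlb : ε ^ Γ.card - θ ≤ (P (S t)).toReal := by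
    rw [hSt]; linarith [h2.1]
  have ha : 0 ≤ (P (D t ∩ S t)).toReal := ENNReal.toReal_nonneg
  have key : (P (D t ∩ S t)).toReal / (P (S t)).toReal ≤
      (ε ^ (Γ.card + 1) - σ) / (ε ^ Γ.card - θ) :=
    div_le_div₀ (le_trans ha h1) h1 hden hSlb
  have heq : ε * (1 - (σ * ε⁻¹ - θ) / (ε ^ Γ.card - θ)) =
      (ε ^ (Γ.card + 1) - σ) / (ε ^ Γ.card - θ) := by
    field_simp
    ring
  rw [heq]; exact key
end

section
/- Theorem (dichotomy for correlations over combinatorial lines): Let k ≥ 2 be an integer and ε, σ, η > 0 with ε ≤ 1 − 1/(2k), σ ≤ ε^{k−1}/(2k), and η ≤ σ/4^{k−1}. Let A be a set with |A| = k, n ≥ k an integer, and ⟨D_t : t ∈ A^n⟩ an η-stationary process in (Ω,F,P) with |P(D_t) − ε| ≤ η for all t. Then either (i) for every combinatorial line L of A^n and every nonempty G ⊆ L, |P(⋂_{t∈G} D_t) − ε^{|G|}| ≤ σ; or (ii) there exist a nonempty Γ ⊆ A, β ∈ A\Γ, and a process ⟨S_t : t ∈ A^n⟩ such that (a) S_t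 = ⋂_{α∈Γ} E^α_t where each ⟨E^α_t : t ∈ A^n⟩ is (α,β)-insensitive, and (b) for every t ∈ A^n containing β: P(S_t) ≥ ε^{k−1}/(4k) and P(D_t | S_t) ≥ ε + σ/4^{k−1}. -/
open MeasureTheory

/-- `s` and `t` are `(α,β)`-equivalent: they agree at every coordinate whose value lies
outside `{α, β}`. -/
def EquivAB {A : Type*} {n : ℕ} (α β : A) (s t : Fin n → A) : Prop :=
  ∀ (i : Fin n) (γ : A), γ ≠ α → γ ≠ β → (s i = γ ↔ t i = γ)

/-- An `(α,β)`-insensitive process. -/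
def Insensitive {A Ω : Type*} {n : ℕ} (α β : A) (E : (Fin n → A) → Set Ω) : Prop :=
  ∀ s t : Fin n → A, EquivAB α β s t → E s = E t

private lemma sub_eq_of_equivAB {A : Type*} [DecidableEq A] {n : ℕ} {α β : A} (hαβ : α ≠ β)
    {s t : Fin n → A} (h : EquivAB α β s t) :
    (fun i => if s i = β then α else s i) = (fun i => if t i = β then α else t i) := by
  funext i
  by_cases hs : s i = α ∨ s i = β
  · have ht : t i = α ∨ t i = β := by
      by_contra hc
      push_neg at hc
      have h2 := (h i (t i) hc.1 hc.2).mpr rfl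
      rcases hs with h1 | h1
      · exact hc.1 (h2.symm.trans h1)
      · exact hc.2 (h2.symm.trans h1)
    rcases hs with h1 | h1 <;> rcases ht with h2 | h2 <;> simp [h1, h2, hαβ]
  · push_neg at hs
    have h2 := (h i (s i) hs.1 hs.2).mp rfl
    rw [← h2]

private lemma wsubst_word {A : Type*} [DecidableEq A] {n : ℕ} (t : Fin n → A) (β α : A) :
    wsubst (fun i => if t i = β then none else some (t i)) α
      = fun i => if t i = β then α else t i := by
  funext i
  by_cases h : t i = β <;> simp [wsubst, h]

private lemma sub_self_fun {A : Type*} [DecidableEq A] {n : ℕ} (t : Fin n → A) (β : A) :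
    (fun i => if t i = β then β else t i) = t := by
  funext i
  by_cases h : t i = β <;> simp [h]

private def subE {A Ω : Type*} [DecidableEq A] {n : ℕ} (D : (Fin n → A) → Set Ω) (β α : A) :
    (Fin n → A) → Set Ω := fun t => D (fun i => if t i = β then α else t i)

private lemma subE_insensitive {A Ω : Type*} [DecidableEq A] {n : ℕ}
    (D : (Fin n → A) → Set Ω) {α β : A} (hαβ : α ≠ β) :
    Insensitive α β (subE D β α) :=
  fun s t h => congrArg D (sub_eq_of_equivAB hαβ h)

private lemma subE_beta {A Ω : Type*} [DecidableEq A] {n : ℕ}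
    (D : (Fin n → A) → Set Ω) (β : A) (t : Fin n → A) : subE D β β t = D t :=
  congrArg D (sub_self_fun t β)

private lemma subE_wsubst {A Ω : Type*} [DecidableEq A] {n : ℕ}
    (D : (Fin n → A) → Set Ω) (β α : A) (t : Fin n → A) :
    subE D β α t = D (wsubst (fun i => if t i = β then none else some (t i)) α) :=
  congrArg D (wsubst_word t β α).symm

private lemma preal_diff {Ω : Type*} [MeasurableSpace Ω] (P : Measure Ω) [IsProbabilityMeasure P]
    (X Y : Set Ω) (hY : MeasurableSet Y) :
    (P (X \ Y)).toReal = (P X).toReal - (P (X ∩ Y)).toReal := by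
  have h := measure_inter_add_diff (μ := P) X hY
  have h2 := ENNReal.toReal_add (measure_ne_top P (X ∩ Y)) (measure_ne_top P (X \ Y))
  rw [h] at h2
  linarith

private lemma preal_le_one {Ω : Type*} [MeasurableSpace Ω] (P : Measure Ω)
    [IsProbabilityMeasure P] (X : Set Ω) : (P X).toReal ≤ 1 := by
  simpa using ENNReal.toReal_mono ENNReal.one_ne_top (prob_le_one (μ := P) (s := X))

set_option maxHeartbeats 2000000

/-- Theorem: dichotomy for correlations of stationary processes over combinatorial lines. -/
theorem stmt6 {A Ω : Type*} [Fintype A] [MeasurableSpace Ω]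
    (k : ℕ) (hk : 2 ≤ k) (hcard : Fintype.card A = k)
    (ε σ η : ℝ) (hε : 0 < ε) (hσ : 0 < σ) (hη : 0 < η)
    (hε1 : ε ≤ 1 - 1 / (2 * k)) (hσ1 : σ ≤ ε ^ (k - 1) / (2 * k))
    (hη1 : η ≤ σ / 4 ^ (k - 1))
    {n : ℕ} (hn : k ≤ n)
    (P : Measure Ω) [IsProbabilityMeasure P]
    (D : (Fin n → A) → Set Ω) (hmeas : ∀ t, MeasurableSet (D t))
    (hstat : StationaryLines P D η) (hPD : ∀ t, |(P (D t)).toReal - ε| ≤ η) :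
    (∀ v : Fin n → Option A, IsVarWord v → ∀ Γ : Finset A, Γ.Nonempty →
      |(P (⋂ α ∈ Γ, D (wsubst v α))).toReal - ε ^ Γ.card| ≤ σ) ∨
    (∃ (Γ : Finset A) (β : A) (E : A → (Fin n → A) → Set Ω) (S : (Fin n → A) → Set Ω),
      Γ.Nonempty ∧ β ∉ Γ ∧
      (∀ t, S t = ⋂ α ∈ Γ, E α t) ∧
      (∀ α ∈ Γ, Insensitive α β (E α)) ∧
      (∀ t : Fin n → A, (∃ i, t i = β) →
        (P (S t)).toReal ≥ ε ^ (k - 1) / (4 * k) ∧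
        (P (D t ∩ S t)).toReal / (P (S t)).toReal ≥ ε + σ / 4 ^ (k - 1))) := by
  classical
  have hk2 : (2 : ℝ) ≤ (k : ℝ) := by exact_mod_cast hk
  have hkpos : (0 : ℝ) < (k : ℝ) := by linarith
  have hε1' : ε ≤ 1 := by
    have h2 : 0 < 1 / (2 * (k : ℝ)) := by positivity
    linarith
  have hq : 0 < ε ^ (k - 1) := pow_pos hε _
  have hq1 : ε ^ (k - 1) ≤ 1 := pow_le_one₀ hε.le hε1'
  have hσ4 : σ ≤ 1 / 4 := by
    have h1 : σ ≤ 1 / (2 * (k : ℝ)) :=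
      le_trans hσ1 ((div_le_div_iff_of_pos_right (by positivity)).mpr hq1)
    have h2 : 1 / (2 * (k : ℝ)) ≤ 1 / 4 := by
      apply one_div_le_one_div_of_le (by norm_num)
      linarith
    linarith
  set s : ℕ → ℝ := fun j => σ / 4 ^ (k - j) with hs_def
  have hs_pos : ∀ j, 0 < s j := fun j => by simp only [hs_def]; positivity
  have hs_le : ∀ j, s j ≤ σ := fun j => by
    simp only [hs_def]
    exact div_le_self hσ.le (one_le_pow₀ (by norm_num))
  have hs1eq : s 1 = σ / 4 ^ (k - 1) := by simp only [hs_def]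
  set Bad : ℕ → Prop := fun j => ∃ Γ : Finset A, Γ.card = j ∧ ∃ v : Fin n → Option A,
      IsVarWord v ∧ s j < |(P (⋂ α ∈ Γ, D (wsubst v α))).toReal - ε ^ j| with hBad_def
  by_cases hbad : ∃ j, Bad j
  · -- dichotomy second alternative
    right
    obtain ⟨m, hmBad, hmmin⟩ : ∃ m, Bad m ∧ ∀ j, j < m → ¬ Bad j :=
      ⟨Nat.find hbad, Nat.find_spec hbad, fun j hj => Nat.find_min hbad hj⟩
    have hBad0 : ¬ Bad 0 := by
      simp only [hBad_def]
      rintro ⟨Γ0, hc0, v0, hv0, hlt⟩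
      rw [Finset.card_eq_zero] at hc0
      subst hc0
      simp only [Finset.notMem_empty, Set.iInter_of_empty, Set.iInter_univ, measure_univ,
        ENNReal.toReal_one, pow_zero, sub_self, abs_zero] at hlt
      exact absurd hlt (not_lt.mpr (hs_pos 0).le)
    have hBad1 : ¬ Bad 1 := by
      simp only [hBad_def]
      rintro ⟨Γ0, hc0, v0, hv0, hlt⟩
      rw [Finset.card_eq_one] at hc0
      obtain ⟨α, rfl⟩ := hc0
      rw [Finset.set_biInter_singleton, pow_one] at hlt
      have h1 := hPD (wsubst v0 α)
      have h2 : s 1 = σ / 4 ^ (k - 1) := by simp only [hs_def]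
      linarith [abs_nonneg ((P (D (wsubst v0 α))).toReal - ε)]
    have hm2 : 2 ≤ m := by
      by_contra h
      push_neg at h
      interval_cases m
      · exact hBad0 hmBad
      · exact hBad1 hmBad
    simp only [hBad_def] at hmBad
    obtain ⟨Γ, hΓcard, v, hv, hviol⟩ := hmBad
    have hmk : m ≤ k := by
      rw [← hΓcard, ← hcard]
      exact Finset.card_le_univ Γ
    have hΓne : Γ.Nonempty := Finset.card_pos.mp (by omega)
    obtain ⟨β, hβ⟩ := hΓne
    have hΓne : Γ.Nonempty := ⟨β, hβ⟩
    set Γ' := Γ.erase β with hΓ'def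
    have hβΓ' : β ∉ Γ' := Finset.notMem_erase β Γ
    have hΓ'card : Γ'.card = m - 1 := by
      rw [hΓ'def, Finset.card_erase_of_mem hβ, hΓcard]
    have hΓ'ne : Γ'.Nonempty := Finset.card_pos.mp (by omega)
    obtain ⟨α₀, hα₀⟩ := hΓ'ne
    have hΓ'ne : Γ'.Nonempty := ⟨α₀, hα₀⟩
    have hα₀β : α₀ ≠ β := Finset.ne_of_mem_erase hα₀
    set Γ'' := Γ'.erase α₀ with hΓ''def
    have hΓ''card : Γ''.card = m - 2 := by
      rw [hΓ''def, Finset.card_erase_of_mem hα₀, hΓ'card]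
      omega
    have hins : insert β Γ' = Γ := Finset.insert_erase hβ
    have hins' : insert α₀ Γ'' = Γ' := Finset.insert_erase hα₀
    have hβΓ'' : β ∉ Γ'' := fun h => hβΓ' (Finset.mem_of_mem_erase h)
    have hα₀Γ'' : α₀ ∉ Γ'' := Finset.notMem_erase _ _
    have hcardbis : (insert β Γ'').card = m - 1 := by
      rw [Finset.card_insert_of_notMem hβΓ'', hΓ''card]
      omega
    have hinsΓ : insert α₀ (insert β Γ'') = Γ := by
      rw [Finset.insert_comm, hins', hins]
    -- the insensitive processes
    set E : A → (Fin n → A) → Set Ω := fun α => subE D β α with hE_def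
    have hEmeas : ∀ α t, MeasurableSet (E α t) := fun α t => hmeas _
    -- arithmetic facts about the scale s
    have hsm_pos := hs_pos m
    have hsmσ := hs_le m
    have hs_m1 : s (m - 1) = s m / 4 := by
      simp only [hs_def]
      have e : k - (m - 1) = (k - m) + 1 := by omega
      rw [e, pow_succ, ← div_div]
    have hs_m2 : s (m - 2) = s m / 16 := by
      simp only [hs_def]
      have e : k - (m - 2) = (k - m) + 2 := by omega
      rw [e, pow_add, ← div_div]
      norm_num
    have hs_1m : s 1 ≤ s m / 4 := by
      simp only [hs_def]
      rw [div_div, ← pow_succ]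
      gcongr
      · norm_num
      · omega
    have hη_s1 : η ≤ s 1 := by rw [hs1eq]; exact hη1
    -- power facts
    have hpm : ε ^ m = ε ^ (m - 1) * ε := by
      rw [← pow_succ]
      congr 1
      omega
    have hpm2 : ε ^ (m - 1) = ε ^ (m - 2) * ε := by
      rw [← pow_succ]
      congr 1
      omega
    have hpm1_le : ε ^ (m - 1) ≤ 1 := pow_le_one₀ hε.le hε1'
    have hpm2_le : ε ^ (m - 2) ≤ 1 := pow_le_one₀ hε.le hε1'
    have hq_m1 : ε ^ (k - 1) ≤ ε ^ (m - 1) := pow_le_pow_of_le_one hε.le hε1' (by omega)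
    have hq_m2 : ε ^ (k - 1) ≤ ε ^ (m - 2) := pow_le_pow_of_le_one hε.le hε1' (by omega)
    -- handy constants
    have hupos : 0 < ε ^ (k - 1) / (4 * (k : ℝ)) := by positivity
    have hqk : ε ^ (k - 1) / (2 * (k : ℝ)) = 2 * (ε ^ (k - 1) / (4 * (k : ℝ))) := by
      field_simp
      ring
    have hσu : σ ≤ 2 * (ε ^ (k - 1) / (4 * (k : ℝ))) := by rw [← hqk]; exact hσ1
    have hqu : 8 * (ε ^ (k - 1) / (4 * (k : ℝ))) ≤ ε ^ (k - 1) := by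
      have e1 : ε ^ (k - 1) / (4 * (k : ℝ)) * (4 * (k : ℝ)) = ε ^ (k - 1) :=
        div_mul_cancel₀ _ (by positivity)
      linarith [e1, mul_le_mul_of_nonneg_right hk2 hupos.le]
    -- the core per-point estimates
    have core : ∀ t : Fin n → A, (∃ i, t i = β) →
        (∀ Δ : Finset A, Δ.card < m →
          |(P (⋂ α ∈ Δ, E α t)).toReal - ε ^ Δ.card| ≤ s Δ.card) ∧
        |(P (⋂ α ∈ Γ, E α t)).toReal - (P (⋂ α ∈ Γ, D (wsubst v α))).toReal| ≤ η := by
      rintro t ⟨i₀, hti⟩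
      have hvt : IsVarWord (fun i => if t i = β then none else some (t i)) :=
        ⟨i₀, by simp [hti]⟩
      have hset : ∀ Δ : Finset A, (⋂ α ∈ Δ, E α t)
          = ⋂ α ∈ Δ, D (wsubst (fun i => if t i = β then none else some (t i)) α) := by
        intro Δ
        refine Set.iInter₂_congr fun α _ => ?_
        rw [hE_def]
        exact subE_wsubst D β α t
      constructor
      · intro Δ hΔ
        rw [hset]
        by_contra hcon
        push_neg at hcon
        refine hmmin _ hΔ ?_
        simp only [hBad_def]
        exact ⟨Δ, rfl, _, hvt, hcon⟩
      · rw [hset]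
        exact hstat Γ hΓne _ v hvt hv
    -- transfer the violation
    have hviol' : ε ^ m + s m < (P (⋂ α ∈ Γ, D (wsubst v α))).toReal ∨
        (P (⋂ α ∈ Γ, D (wsubst v α))).toReal < ε ^ m - s m := by
      rcases lt_abs.mp hviol with h | h
      · left; linarith
      · right; linarith
    rcases hviol' with hpos | hneg
    · -- positive correlation case
      refine ⟨Γ', β, E, fun t => ⋂ α ∈ Γ', E α t, hΓ'ne, hβΓ', fun t => rfl, ?_, ?_⟩
      · intro α hα
        rw [hE_def]
        exact subE_insensitive D (Finset.ne_of_mem_erase hα)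
      · intro t ht
        obtain ⟨hbnd, hstat_t⟩ := core t ht
        have hb := hbnd Γ' (by omega)
        rw [hΓ'card, hs_m1] at hb
        obtain ⟨hb_low, hb_up⟩ := abs_le.mp hb
        have hb1 : (P (⋂ α ∈ Γ', E α t)).toReal ≤ 1 := preal_le_one P _
        have hb0 : 0 ≤ (P (⋂ α ∈ Γ', E α t)).toReal := ENNReal.toReal_nonneg
        have hDS : D t ∩ (⋂ α ∈ Γ', E α t) = ⋂ α ∈ Γ, E α t := by
          rw [← hins, Finset.set_biInter_insert]
          congr 1
          rw [hE_def]
          exact (subE_beta D β t).symm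
        have hc_low : ε ^ m + s m - η
            < (P (⋂ α ∈ Γ, E α t)).toReal := by
          obtain ⟨h1, h2⟩ := abs_le.mp hstat_t
          linarith
        have hSlow : (P (⋂ α ∈ Γ', E α t)).toReal ≥ ε ^ (k - 1) / (4 * (k : ℝ)) := by
          linarith
        constructor
        · exact hSlow
        · rw [hDS, ge_iff_le, ← hs1eq, le_div_iff₀ (by linarith)]
          have p1 : ε * (P (⋂ α ∈ Γ', E α t)).toReal ≤ ε * (ε ^ (m - 1) + s m / 4) :=
            mul_le_mul_of_nonneg_left (by linarith) hε.le
          have p2 : s 1 * (P (⋂ α ∈ Γ', E α t)).toReal ≤ s 1 * 1 :=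
            mul_le_mul_of_nonneg_left hb1 (hs_pos 1).le
          have hεm : ε * ε ^ (m - 1) = ε ^ m := by rw [hpm]; ring
          have hexp : ε * (ε ^ (m - 1) + s m / 4) = ε ^ m + ε * (s m / 4) := by
            rw [← hεm]; ring
          have p3 : ε * (s m / 4) ≤ s m / 4 := by
            have := mul_le_mul_of_nonneg_right hε1' (by linarith : (0:ℝ) ≤ s m / 4)
            linarith
          have e2 : (ε + s 1) * (P (⋂ α ∈ Γ', E α t)).toReal
              = ε * (P (⋂ α ∈ Γ', E α t)).toReal + s 1 * (P (⋂ α ∈ Γ', E α t)).toReal := by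
            ring
          linarith [p1, p2, p3, hc_low, hη_s1, hs_1m, hexp, e2]
    · -- negative correlation case
      have hEins : ∀ α, α ≠ β → Insensitive α β (E α) := by
        intro α hαβ
        rw [hE_def]
        exact subE_insensitive D hαβ
      set F : A → (Fin n → A) → Set Ω :=
        fun α => if α = α₀ then (fun t => (E α t)ᶜ) else E α with hF_def
      refine ⟨Γ', β, F, fun t => ⋂ α ∈ Γ', F α t, hΓ'ne, hβΓ', fun t => rfl, ?_, ?_⟩
      · intro α hα
        have hαβ : α ≠ β := Finset.ne_of_mem_erase hα
        intro s1 t1 h1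
        rw [hF_def]
        by_cases h : α = α₀
        · subst h
          simp only [if_pos rfl]
          exact congrArg compl (hEins α hαβ s1 t1 h1)
        · simp only [if_neg h]
          exact hEins α hαβ s1 t1 h1
      · intro t ht
        obtain ⟨hbnd, hstat_t⟩ := core t ht
        have hb := hbnd Γ' (by omega)
        rw [hΓ'card, hs_m1] at hb
        obtain ⟨hb_low, hb_up⟩ := abs_le.mp hb
        have hb' := hbnd (insert β Γ'') (by rw [hcardbis]; omega)
        rw [hcardbis, hs_m1] at hb'
        obtain ⟨hb'_low, hb'_up⟩ := abs_le.mp hb'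
        have ha := hbnd Γ'' (by rw [hΓ''card]; omega)
        rw [hΓ''card, hs_m2] at ha
        obtain ⟨ha_low, ha_up⟩ := abs_le.mp ha
        have hc_up : (P (⋂ α ∈ Γ, E α t)).toReal < ε ^ m - s m + η := by
          obtain ⟨h1, h2⟩ := abs_le.mp hstat_t
          linarith
        have hFα₀ : F α₀ t = (E α₀ t)ᶜ := by rw [hF_def]; simp
        have hFΓ'' : (⋂ α ∈ Γ'', F α t) = ⋂ α ∈ Γ'', E α t :=
          Set.iInter₂_congr fun α hα => by
            rw [hF_def]
            simp [Finset.ne_of_mem_erase hα]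
        have hS : (⋂ α ∈ Γ', F α t) = (⋂ α ∈ Γ'', E α t) \ E α₀ t := by
          rw [← hins', Finset.set_biInter_insert, hFα₀, hFΓ'', Set.diff_eq, Set.inter_comm]
        have hXY : (⋂ α ∈ Γ'', E α t) ∩ E α₀ t = ⋂ α ∈ Γ', E α t := by
          rw [← hins', Finset.set_biInter_insert, Set.inter_comm]
        have hSval : (P (⋂ α ∈ Γ', F α t)).toReal
            = (P (⋂ α ∈ Γ'', E α t)).toReal - (P (⋂ α ∈ Γ', E α t)).toReal := by
          rw [hS, preal_diff P _ _ (hEmeas α₀ t), hXY]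
        have hDX : D t ∩ ((⋂ α ∈ Γ'', E α t) \ E α₀ t)
            = (⋂ α ∈ insert β Γ'', E α t) \ E α₀ t := by
          rw [Finset.set_biInter_insert, Set.inter_diff_assoc]
          congr 1
          rw [hE_def]
          exact (subE_beta D β t).symm
        have hX'Y : (⋂ α ∈ insert β Γ'', E α t) ∩ E α₀ t = ⋂ α ∈ Γ, E α t := by
          conv_rhs => rw [← hinsΓ, Finset.set_biInter_insert]
          exact Set.inter_comm _ _
        have hDval : (P (D t ∩ (⋂ α ∈ Γ', F α t))).toReal
            = (P (⋂ α ∈ insert β Γ'', E α t)).toReal - (P (⋂ α ∈ Γ, E α t)).toReal := by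
          rw [hS, hDX, preal_diff P _ _ (hEmeas α₀ t), hX'Y]
        have h2k : 1 / (2 * (k : ℝ)) ≤ 1 - ε := by linarith
        have hd' : ε ^ (k - 1) / (2 * (k : ℝ)) ≤ ε ^ (m - 2) * (1 - ε) := by
          rw [div_eq_mul_one_div]
          exact mul_le_mul hq_m2 h2k (by positivity) (pow_nonneg hε.le _)
        have hid : ε ^ (m - 2) * (1 - ε) = ε ^ (m - 2) - ε ^ (m - 1) := by
          rw [hpm2]; ring
        have key : ε ^ (k - 1) / (2 * (k : ℝ)) - 5 * s m / 16
            ≤ (P (⋂ α ∈ Γ'', E α t)).toReal - (P (⋂ α ∈ Γ', E α t)).toReal := by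
          linarith
        have hSlow : (P (⋂ α ∈ Γ', F α t)).toReal ≥ ε ^ (k - 1) / (4 * (k : ℝ)) := by
          rw [hSval]
          linarith
        constructor
        · exact hSlow
        · have habpos : 0 < (P (⋂ α ∈ Γ'', E α t)).toReal
              - (P (⋂ α ∈ Γ', E α t)).toReal := by
            rw [← hSval]
            linarith
          rw [ge_iff_le, ← hs1eq, hDval, hSval, le_div_iff₀ habpos]
          have hid2 : ε ^ (m - 1) - ε ^ m = ε * (ε ^ (m - 2) * (1 - ε)) := by
            rw [hpm, hpm2]; ring
          have hd0 : 0 ≤ ε ^ (m - 2) * (1 - ε) :=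
            mul_nonneg (pow_nonneg hε.le _) (by linarith)
          have hd1 : ε ^ (m - 2) * (1 - ε) ≤ 1 - ε :=
            mul_le_of_le_one_left (by linarith) hpm2_le
          have hw_up : (P (⋂ α ∈ Γ'', E α t)).toReal - (P (⋂ α ∈ Γ', E α t)).toReal
              ≤ ε ^ (m - 2) * (1 - ε) + 5 * s m / 16 := by
            rw [hid]
            linarith
          have step1 : (ε + s 1) * ((P (⋂ α ∈ Γ'', E α t)).toReal
                - (P (⋂ α ∈ Γ', E α t)).toReal)
              ≤ (ε + s 1) * (ε ^ (m - 2) * (1 - ε) + 5 * s m / 16) :=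
            mul_le_mul_of_nonneg_left hw_up (by positivity)
          have hbc : ε * (ε ^ (m - 2) * (1 - ε)) + 3 * s m / 4 - η
              ≤ (P (⋂ α ∈ insert β Γ'', E α t)).toReal - (P (⋂ α ∈ Γ, E α t)).toReal := by
            linarith [hid2]
          have hsd : s 1 * (ε ^ (m - 2) * (1 - ε)) ≤ s 1 * (1 - ε) :=
            mul_le_mul_of_nonneg_left hd1 (hs_pos 1).le
          have P4 : ε * s m ≤ s m := by
            have := mul_le_mul_of_nonneg_right hε1' hsm_pos.le
            linarith
          have e1 : (ε + s 1) * (ε ^ (m - 2) * (1 - ε) + 5 * s m / 16)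
              = ε * (ε ^ (m - 2) * (1 - ε)) + 5 * (ε * s m) / 16
                + s 1 * (ε ^ (m - 2) * (1 - ε)) + 5 * (s 1 * s m) / 16 := by
            ring
          have q2 : s 1 * (1 - ε) ≤ s m / 4 - ε * s m / 4 := by
            have r1 : s 1 * (1 - ε) ≤ (s m / 4) * (1 - ε) :=
              mul_le_mul_of_nonneg_right (by linarith [hs_1m]) (by linarith)
            have r2 : (s m / 4) * (1 - ε) = s m / 4 - ε * s m / 4 := by ring
            linarith
          have q3 : s 1 * s m ≤ s m / 16 := by
            have r3 : s 1 * s m ≤ (s m / 4) * s m :=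
              mul_le_mul_of_nonneg_right (by linarith [hs_1m]) hsm_pos.le
            have r4 : s m * s m ≤ (1 / 4) * s m :=
              mul_le_mul_of_nonneg_right (by linarith) hsm_pos.le
            linarith
          linarith [step1, hbc, hsd, q2, q3, P4, e1, hη_s1, hs_1m, hsm_pos.le]
  · -- first alternative
    left
    push_neg at hbad
    intro v hv Γ hΓ
    have h1 := hbad Γ.card
    simp only [hBad_def] at h1
    push_neg at h1
    exact le_trans (h1 Γ rfl v hv) (hs_le _)
end

section
/- Let A be a finite set with |A| ≥ 2, n, p positive integers with 2 ≤ p ≤ |A|^n, and (t₁,…,t_p) a tuple of distinct elements of A^n. For every permutation π of [p], τ((t_{π(1)},…,t_{π(p)})) = (s_{π(1)},…,s_{π(p)}) where (s₁,…,s_p) = τ((t₁,…,t_p)). In particular, the type τ(G) of a nonempty finite set G ⊆ A^n is well-defined independently of the chosen enumeration of G. -/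
/-- The type of a tuple `(t₁,…,t_p)` of elements of `A^n`, represented as a list of rows:
form the list of rows of the `n × p` coordinate matrix (row `i` is `j ↦ t_j(i)`),
delete the constant rows, and collapse consecutive identical rows. -/
def typeRows {A : Type*} [DecidableEq A] {n p : ℕ} (t : Fin p → Fin n → A) :
    List (Fin p → A) :=
  (((List.finRange n).map (fun i => fun j => t j i)).filter
      (fun r => decide (∃ j j' : Fin p, r j ≠ r j'))).destutter (· ≠ ·)

lemma destutter'_map {α β : Type*} (R : α → α → Prop) (R' : β → β → Prop)
    [DecidableRel R] [DecidableRel R'] (f : α → β)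
    (hf : ∀ a b, R' (f a) (f b) ↔ R a b) :
    ∀ (l : List α) (a : α),
      (l.map f).destutter' R' (f a) = (l.destutter' R a).map f := by
  intro l
  induction l with
  | nil => intro a; simp
  | cons b l ih =>
    intro a
    simp only [List.map_cons, List.destutter'_cons]
    by_cases h : R a b
    · rw [if_pos ((hf a b).2 h), if_pos h, List.map_cons, ih]
    · rw [if_neg (fun hc => h ((hf a b).1 hc)), if_neg h, ih]

lemma destutter_map {α β : Type*} (R : α → α → Prop) (R' : β → β → Prop)
    [DecidableRel R] [DecidableRel R'] (f : α → β)
    (hf : ∀ a b, R' (f a) (f b) ↔ R a b) (l : List α) :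
    (l.map f).destutter R' = (l.destutter R).map f := by
  cases l with
  | nil => simp
  | cons a l => exact destutter'_map R R' f hf l a

lemma typeRows_perm {A : Type*} [DecidableEq A] {n p : ℕ} (t : Fin p → Fin n → A)
    (π : Equiv.Perm (Fin p)) :
    typeRows (fun j => t (π j)) = (typeRows t).map (fun r => r ∘ π) := by
  unfold typeRows
  have h1 : ((List.finRange n).map (fun i => fun j => t (π j) i)) =
      ((List.finRange n).map (fun i => fun j => t j i)).map (fun r => r ∘ π) := by
    simp only [List.map_map]; rfl
  rw [h1, List.filter_map]
  have h2 : ((fun r : Fin p → A => decide (∃ j j' : Fin p, r j ≠ r j')) ∘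
      (fun r => r ∘ π)) = (fun r : Fin p → A => decide (∃ j j' : Fin p, r j ≠ r j')) := by
    funext r
    simp only [Function.comp_apply, decide_eq_decide]
    constructor
    · rintro ⟨j, j', h⟩; exact ⟨π j, π j', h⟩
    · rintro ⟨j, j', h⟩; exact ⟨π.symm j, π.symm j', by simpa using h⟩
  rw [h2]
  exact destutter_map _ _ _ (fun a b => by
    constructor
    · intro h hc; exact h (hc ▸ rfl)
    · intro h hc
      exact h (funext fun j => by
        have := congrFun hc (π.symm j); simpa using this)) _

theorem stmt9 {A : Type*} [Fintype A] [DecidableEq A]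
    (hA : 2 ≤ Fintype.card A) {n p : ℕ} (hn : 0 < n)
    (hp : 2 ≤ p) (hpc : p ≤ Fintype.card A ^ n)
    (t : Fin p → Fin n → A) (ht : Function.Injective t) :
    (∀ π : Equiv.Perm (Fin p),
      typeRows (fun j => t (π j)) = (typeRows t).map (fun r => r ∘ π)) ∧
    (∀ t' : Fin p → Fin n → A, Function.Injective t' → Set.range t' = Set.range t →
      Finset.image (fun j : Fin p => (typeRows t').map (fun r => r j)) Finset.univ =
        Finset.image (fun j : Fin p => (typeRows t).map (fun r => r j)) Finset.univ) := by
  constructor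
  · exact typeRows_perm t
  · intro t' ht' hrange
    -- build a permutation π with t' = t ∘ π
    have hmem : ∀ j, t' j ∈ Set.range t := fun j => hrange ▸ Set.mem_range_self j
    choose g hg using hmem
    have hginj : Function.Injective g := fun a b hab => ht' (by rw [← hg a, ← hg b, hab])
    let π : Equiv.Perm (Fin p) := Equiv.ofBijective g
      ((Fintype.bijective_iff_injective_and_card g).2 ⟨hginj, rfl⟩)
    have ht'eq : t' = fun j => t (π j) := funext fun j => (hg j).symm
    rw [ht'eq, typeRows_perm t π]
    ext x
    simp only [Finset.mem_image, Finset.mem_univ, true_and, List.map_map]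
    constructor
    · rintro ⟨j, rfl⟩
      exact ⟨π j, by simp [Function.comp]⟩
    · rintro ⟨j, rfl⟩
      exact ⟨π.symm j, by simp [Function.comp]⟩
end

section
/- Let k, n, p be positive integers with k ≥ 2 and 2 ≤ p ≤ k^n, let A be a set with |A| = k, and let P denote the uniform probability measure on (A^n)^p. Then the probability that a random tuple t = (t₁,…,t_p) is 1-separated satisfies P(t is 1-separated) ≥ 1 − p·e^{−n((k−1)/k)^p}. -/
open Finset

lemma good_count {A : Type*} [Fintype A] [DecidableEq A] {k p : ℕ} (hk : 1 ≤ k)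
    (hcard : Fintype.card A = k) (j : Fin p) :
    (k-1)^(j:ℕ) * k^(p-(j:ℕ)) ≤
      Fintype.card {c : Fin p → A // ∀ q : Fin p, (q:ℕ) < (j:ℕ) → c j ≠ c q} := by
  classical
  have hne : ∀ a : A, Fintype.card {x : A // x ≠ a} = k - 1 := by
    intro a
    have : Fintype.card {x : A // ¬ x = a} = Fintype.card A - Fintype.card {x : A // x = a} :=
      Fintype.card_subtype_compl _
    rwa [Fintype.card_subtype_eq a, hcard] at this
  set S := Σ a : A, Π q : Fin p, {x : A // ((q:ℕ) < (j:ℕ) → x ≠ a) ∧ (q = j → x = a)} with hS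
  have hinj : Function.Injective (fun s : S =>
      (⟨fun q => (s.2 q).1, by
        intro q hq
        show (s.2 j).1 ≠ (s.2 q).1
        have hja : (s.2 j).1 = s.1 := (s.2 j).2.2 rfl
        have hqa : (s.2 q).1 ≠ s.1 := (s.2 q).2.1 hq
        rw [hja]; exact fun h => hqa h.symm⟩ :
        {c : Fin p → A // ∀ q : Fin p, (q:ℕ) < (j:ℕ) → c j ≠ c q})) := by
    rintro ⟨a, g⟩ ⟨b, g'⟩ h
    have h' : (fun q => (g q).1) = fun q => (g' q).1 := congrArg Subtype.val h
    have hab : a = b := by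
      have := congrFun h' j
      rw [(g j).2.2 rfl, (g' j).2.2 rfl] at this; exact this
    subst hab
    have : g = g' := funext fun q => Subtype.ext (congrFun h' q)
    subst this; rfl
  have hcardS : Fintype.card S = (k-1)^(j:ℕ) * k^(p-(j:ℕ)) := by
    have hpi : ∀ a : A, Fintype.card (Π q : Fin p,
        {x : A // ((q:ℕ) < (j:ℕ) → x ≠ a) ∧ (q = j → x = a)}) =
        (k-1)^(j:ℕ) * k^(p-((j:ℕ)+1)) := by
      intro a
      rw [Fintype.card_pi]
      have hcong : ∀ q : Fin p, Fintype.card {x : A // ((q:ℕ) < (j:ℕ) → x ≠ a) ∧ (q = j → x = a)}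
          = (fun m : ℕ => if m = (j:ℕ) then 1 else if m < (j:ℕ) then k-1 else k) (q:ℕ) := by
        intro q
        by_cases hq : q = j
        · subst hq
          have e : Fintype.card {x : A // ((q:ℕ) < (q:ℕ) → x ≠ a) ∧ (q = q → x = a)}
              = Fintype.card {x : A // x = a} :=
            Fintype.card_congr (Equiv.subtypeEquivRight (fun x =>
              ⟨fun h => h.2 rfl, fun h => ⟨fun hlt => absurd hlt (lt_irrefl _), fun _ => h⟩⟩))
          rw [e, Fintype.card_subtype_eq a]; simp
        · have hqj : (q:ℕ) ≠ (j:ℕ) := fun h => hq (Fin.ext h)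
          simp only [if_neg hqj]
          by_cases hlt : (q:ℕ) < (j:ℕ)
          · have e : Fintype.card {x : A // ((q:ℕ) < (j:ℕ) → x ≠ a) ∧ (q = j → x = a)}
                = Fintype.card {x : A // x ≠ a} :=
              Fintype.card_congr (Equiv.subtypeEquivRight (fun x =>
                ⟨fun h => h.1 hlt, fun h => ⟨fun _ => h, fun hj => absurd hj hq⟩⟩))
            rw [if_pos hlt, e, hne a]
          · have e : Fintype.card {x : A // ((q:ℕ) < (j:ℕ) → x ≠ a) ∧ (q = j → x = a)}
                = Fintype.card A :=
              Fintype.card_congr (Equiv.subtypeUnivEquiv (fun x =>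
                ⟨fun h => absurd h hlt, fun hj => absurd hj hq⟩))
            rw [if_neg hlt, e, hcard]
      rw [Finset.prod_congr rfl (fun q _ => hcong q)]
      rw [Fin.prod_univ_eq_prod_range (fun m => if m = (j:ℕ) then 1 else if m < (j:ℕ) then k-1 else k) p]
      rw [← Finset.prod_range_mul_prod_Ico _ (le_of_lt j.isLt)]
      rw [Finset.prod_eq_prod_Ico_succ_bot j.isLt]
      have h1 : ∏ m ∈ range (j:ℕ), (if m = (j:ℕ) then 1 else if m < (j:ℕ) then k-1 else k) = (k-1)^(j:ℕ) := by
        rw [Finset.prod_congr rfl (fun m hm => ?_), Finset.prod_const, Finset.card_range]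
        rw [Finset.mem_range] at hm
        rw [if_neg (Nat.ne_of_lt hm), if_pos hm]
      have h2 : ∏ m ∈ Ico ((j:ℕ)+1) p, (if m = (j:ℕ) then 1 else if m < (j:ℕ) then k-1 else k) = k^(p-((j:ℕ)+1)) := by
        rw [Finset.prod_congr rfl (fun m hm => ?_), Finset.prod_const, Nat.card_Ico]
        rw [Finset.mem_Ico] at hm
        rw [if_neg (by omega), if_neg (by omega)]
      rw [h1, h2, if_pos rfl, one_mul]
    rw [Fintype.card_sigma, Finset.sum_congr rfl (fun a _ => hpi a), Finset.sum_const,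
      Finset.card_univ, hcard, smul_eq_mul]
    rw [← mul_assoc, mul_comm k, mul_assoc, ← pow_succ']
    congr 2
    omega
  rw [← hcardS]
  exact Fintype.card_le_of_injective _ hinj

lemma bad_count {A : Type*} [Fintype A] [DecidableEq A] {k n p : ℕ} (hk : 1 ≤ k)
    (hcard : Fintype.card A = k) (j : Fin p) :
    Fintype.card {t : Fin p → Fin n → A //
        ∀ i : Fin n, ¬ ∀ q : Fin p, (q:ℕ) < (j:ℕ) → t j i ≠ t q i}
      ≤ (k^p - (k-1)^(j:ℕ) * k^(p-(j:ℕ)))^n := by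
  classical
  set B := {c : Fin p → A // ¬ ∀ q : Fin p, (q:ℕ) < (j:ℕ) → c j ≠ c q} with hB
  have hinj : Function.Injective (fun t : {t : Fin p → Fin n → A //
      ∀ i : Fin n, ¬ ∀ q : Fin p, (q:ℕ) < (j:ℕ) → t j i ≠ t q i} =>
      (fun i => ⟨fun q => t.1 q i, t.2 i⟩ : Fin n → B)) := by
    rintro ⟨t, ht⟩ ⟨t', ht'⟩ h
    simp only at h
    refine Subtype.ext (funext fun q => funext fun i => ?_)
    have := congrArg Subtype.val (congrFun h i)
    exact congrFun this q
  have h1 := Fintype.card_le_of_injective _ hinj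
  rw [Fintype.card_fun, Fintype.card_fin] at h1
  refine h1.trans (Nat.pow_le_pow_left ?_ n)
  have h2 : Fintype.card B = Fintype.card (Fin p → A) -
      Fintype.card {c : Fin p → A // ∀ q : Fin p, (q:ℕ) < (j:ℕ) → c j ≠ c q} :=
    Fintype.card_subtype_compl _
  rw [h2, Fintype.card_fun, Fintype.card_fin, hcard]
  exact Nat.sub_le_sub_left (good_count hk hcard j) _



/-- A tuple `(t₁,…,t_p)` of elements of `A^n` is 1-separated if for every `j ≥ 2` there is
a single coordinate `i` at which `t_j` differs from all earlier `t_q`. -/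
def OneSep {A : Type*} {n p : ℕ} (t : Fin p → Fin n → A) : Prop :=
  ∀ j : Fin p, 1 ≤ (j : ℕ) → ∃ i : Fin n, ∀ q : Fin p, (q : ℕ) < (j : ℕ) → t j i ≠ t q i

theorem stmt12 {A : Type*} [Fintype A] [DecidableEq A]
    (k n p : ℕ) (hk : 2 ≤ k) (hcard : Fintype.card A = k)
    (hn : 0 < n) (hp : 2 ≤ p) (hpk : p ≤ k ^ n) :
    (1 : ℝ) - p * Real.exp (-(n : ℝ) * (((k : ℝ) - 1) / k) ^ p) ≤
      (Nat.card {t : Fin p → Fin n → A // OneSep t} : ℝ) /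
        (Nat.card (Fin p → Fin n → A) : ℝ) := by
  classical
  have hk1 : (1:ℕ) ≤ k := by omega
  have hkR : (0:ℝ) < (k:ℝ) := by exact_mod_cast Nat.lt_of_lt_of_le Nat.zero_lt_two hk
  set x : ℝ := (((k : ℝ) - 1) / k) ^ p with hxdef
  have hx0 : 0 ≤ x := by
    apply pow_nonneg
    apply div_nonneg _ hkR.le
    have : (2:ℝ) ≤ (k:ℝ) := by exact_mod_cast hk
    linarith
  have hx1 : x ≤ 1 := by
    apply pow_le_one₀
    · apply div_nonneg _ hkR.le
      have : (2:ℝ) ≤ (k:ℝ) := by exact_mod_cast hk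
      linarith
    · rw [div_le_one hkR]; linarith
  set E : ℝ := Real.exp (-(n : ℝ) * x) with hEdef
  have hE0 : 0 ≤ E := Real.exp_nonneg _
  have htot : Fintype.card (Fin p → Fin n → A) = k ^ (n*p) := by
    rw [Fintype.card_fun, Fintype.card_fun, Fintype.card_fin, Fintype.card_fin, hcard, ← pow_mul]
  set Gd := univ.filter (fun t : Fin p → Fin n → A => OneSep t) with hGd
  set Bd := univ.filter (fun t : Fin p → Fin n → A => ¬ OneSep t) with hBd
  have hGB : Gd.card + Bd.card = k ^ (n*p) := by
    rw [hGd, hBd, Finset.card_filter_add_card_filter_not, Finset.card_univ, htot]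
  -- union bound
  set J := univ.filter (fun j : Fin p => 1 ≤ (j:ℕ)) with hJ
  set BadF := fun j : Fin p => univ.filter
    (fun t : Fin p → Fin n → A => ∀ i : Fin n, ¬ ∀ q : Fin p, (q:ℕ) < (j:ℕ) → t j i ≠ t q i)
    with hBadF
  have hsub : Bd ⊆ J.biUnion BadF := by
    intro t ht
    rw [hBd, Finset.mem_filter] at ht
    obtain ⟨-, ht⟩ := ht
    rw [OneSep] at ht
    push_neg at ht
    obtain ⟨j, hj1, hj2⟩ := ht
    rw [Finset.mem_biUnion]
    refine ⟨j, by simp [hJ, hj1], ?_⟩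
    rw [hBadF]
    simp only [Finset.mem_filter, Finset.mem_univ, true_and]
    intro i hall
    obtain ⟨q, hq, hqe⟩ := hj2 i
    exact hall q hq hqe
  have hcardBadF : ∀ j : Fin p, (BadF j).card ≤ (k^p - (k-1)^(j:ℕ) * k^(p-(j:ℕ)))^n := by
    intro j
    have := bad_count (n := n) hk1 hcard j
    rwa [Fintype.card_subtype] at this
  -- real bound per j
  have hreal : ∀ j : Fin p, (((k^p - (k-1)^(j:ℕ) * k^(p-(j:ℕ)))^n : ℕ) : ℝ)
      ≤ E * (k:ℝ)^(n*p) := by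
    intro j
    have hjp : (j:ℕ) ≤ p := le_of_lt j.isLt
    have hgle : (k-1)^(j:ℕ) * k^(p-(j:ℕ)) ≤ k^p := by
      calc (k-1)^(j:ℕ) * k^(p-(j:ℕ)) ≤ k^(j:ℕ) * k^(p-(j:ℕ)) :=
            Nat.mul_le_mul_right _ (Nat.pow_le_pow_left (by omega) _)
        _ = k^p := by rw [← pow_add]; congr 1; omega
    have hglow : (k-1)^p ≤ (k-1)^(j:ℕ) * k^(p-(j:ℕ)) := by
      calc (k-1)^p = (k-1)^(j:ℕ) * (k-1)^(p-(j:ℕ)) := by rw [← pow_add]; congr 1; omega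
        _ ≤ (k-1)^(j:ℕ) * k^(p-(j:ℕ)) :=
            Nat.mul_le_mul_left _ (Nat.pow_le_pow_left (by omega) _)
    have hcast1 : (((k-1 : ℕ)) : ℝ) = (k:ℝ) - 1 := by
      push_cast [Nat.cast_sub hk1]; ring
    have hxkp : x * (k:ℝ)^p = ((k:ℝ) - 1)^p := by
      rw [hxdef, div_pow, div_mul_cancel₀]
      positivity
    have hB : (((k^p - (k-1)^(j:ℕ) * k^(p-(j:ℕ)) : ℕ)) : ℝ) ≤ (1 - x) * (k:ℝ)^p := by
      rw [Nat.cast_sub hgle]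
      have h1 : ((k:ℝ) - 1)^p ≤ (((k-1)^(j:ℕ) * k^(p-(j:ℕ)) : ℕ) : ℝ) := by
        have := hglow
        have hc : (((k-1)^p : ℕ) : ℝ) ≤ (((k-1)^(j:ℕ) * k^(p-(j:ℕ)) : ℕ) : ℝ) := by
          exact_mod_cast this
        rwa [Nat.cast_pow, hcast1] at hc
      have h2 : ((k^p : ℕ):ℝ) = (k:ℝ)^p := by push_cast; ring
      rw [h2]
      nlinarith [hxkp]
    have hBn : (((k^p - (k-1)^(j:ℕ) * k^(p-(j:ℕ)) : ℕ)) : ℝ)^n ≤ ((1 - x) * (k:ℝ)^p)^n := by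
      apply pow_le_pow_left₀ (by positivity) hB
    calc (((k^p - (k-1)^(j:ℕ) * k^(p-(j:ℕ)))^n : ℕ) : ℝ)
        = (((k^p - (k-1)^(j:ℕ) * k^(p-(j:ℕ)) : ℕ)) : ℝ)^n := by push_cast; ring
      _ ≤ ((1 - x) * (k:ℝ)^p)^n := hBn
      _ = (1-x)^n * ((k:ℝ)^p)^n := mul_pow _ _ _
      _ ≤ (Real.exp (-x))^n * ((k:ℝ)^p)^n := by
          apply mul_le_mul_of_nonneg_right _ (by positivity)
          apply pow_le_pow_left₀ (by linarith)
          nlinarith [Real.add_one_le_exp (-x)]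
      _ = E * (k:ℝ)^(n*p) := by
          rw [← Real.exp_nat_mul, ← pow_mul, mul_comm p n, hEdef]
          congr 2
          ring
  -- sum up
  have hBdR : (Bd.card : ℝ) ≤ (p:ℝ) * (E * (k:ℝ)^(n*p)) := by
    have h1 : Bd.card ≤ ∑ j ∈ J, (BadF j).card :=
      le_trans (Finset.card_le_card hsub) (Finset.card_biUnion_le)
    have h2 : (Bd.card : ℝ) ≤ ∑ j ∈ J, ((BadF j).card : ℝ) := by exact_mod_cast h1
    refine h2.trans ?_
    calc ∑ j ∈ J, ((BadF j).card : ℝ) ≤ ∑ j ∈ J, (E * (k:ℝ)^(n*p)) := by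
          apply Finset.sum_le_sum
          intro j hj
          refine le_trans ?_ (hreal j)
          exact_mod_cast hcardBadF j
      _ = (J.card : ℝ) * (E * (k:ℝ)^(n*p)) := by rw [Finset.sum_const, nsmul_eq_mul]
      _ ≤ (p:ℝ) * (E * (k:ℝ)^(n*p)) := by
          apply mul_le_mul_of_nonneg_right _ (by positivity)
          have : J.card ≤ p := le_trans (Finset.card_filter_le _ _) (by simp)
          exact_mod_cast this
  -- conclude
  rw [Nat.card_eq_fintype_card, Nat.card_eq_fintype_card, htot, Fintype.card_subtype]
  rw [Nat.cast_pow, le_div_iff₀ (by positivity)]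
  have hGdR : (#Gd : ℝ) = (k:ℝ)^(n*p) - (#Bd : ℝ) := by
    have : ((#Gd + #Bd : ℕ) : ℝ) = ((k ^ (n*p) : ℕ) : ℝ) := by exact_mod_cast hGB
    push_cast at this
    linarith
  have : #(filter (fun t : Fin p → Fin n → A => OneSep t) univ) = #Gd := by rw [hGd]
  rw [this, hGdR]
  nlinarith [hBdR]
end

section
/- Let k, n, p be positive integers with k ≥ 2 and 2 ≤ p ≤ min(k^n, log n), let A be a set with |A| = k, and let P be the uniform probability measure on (A^n)^p. Then P(t is 1-separated) ≥ 1 − log(n)·e^{−n^{1+log((k−1)/k)}}; in particular, for fixed k, P(t is 1-separated) → 1 as n → ∞. -/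
open Finset Real


open Finset in
lemma card_lt_subtype (p m : ℕ) (hm : m < p) :
    Fintype.card {q : Fin p // (q : ℕ) < m} = m := by
  have e : {q : Fin p // (q : ℕ) < m} ≃ Fin m :=
    { toFun := fun q => ⟨q.1, q.2⟩
      invFun := fun i => ⟨⟨i.1, lt_trans i.2 hm⟩, i.2⟩
      left_inv := fun q => rfl
      right_inv := fun i => rfl }
  simp [Fintype.card_congr e]

lemma card_gt_subtype (p m : ℕ) (hm : m < p) :
    Fintype.card {q : Fin p // m < (q : ℕ)} = p - m - 1 := by
  have e : {q : Fin p // m < (q : ℕ)} ≃ Fin (p - m - 1) :=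
    { toFun := fun q => ⟨q.1.1 - m - 1, by omega⟩
      invFun := fun i => ⟨⟨m + 1 + i.1, by omega⟩, show m < m + 1 + i.1 by omega⟩
      left_inv := fun q => by
        ext
        simp only []
        omega
      right_inv := fun i => by
        ext
        simp only []
        omega }
  simp [Fintype.card_congr e]

open Finset in
lemma good_col_lb {A : Type*} [Fintype A] [DecidableEq A] (k p m : ℕ)
    (hA : Fintype.card A = k) (hk : 1 ≤ k) (hm : m < p) :
    (k - 1) ^ m * k ^ (p - m) ≤
      Fintype.card {c : Fin p → A // ∀ q : Fin p, (q : ℕ) < m → c ⟨m, hm⟩ ≠ c q} := by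
  classical
  have hsplit : 1 ≤ p - m := by omega
  obtain ⟨s, hs⟩ : ∃ s, p - m = s + 1 := ⟨p - m - 1, by omega⟩
  have hs' : p - m - 1 = s := by omega
  let D := Σ _y : A, ({q : Fin p // (q : ℕ) < m} → {a : A // a ≠ _y}) ×
      ({q : Fin p // m < (q : ℕ)} → A)
  have hcardD : Fintype.card D = k * ((k - 1) ^ m * k ^ (p - m - 1)) := by
    rw [Fintype.card_sigma]
    have : ∀ y : A, Fintype.card
        (({q : Fin p // (q : ℕ) < m} → {a : A // a ≠ y}) × ({q : Fin p // m < (q : ℕ)} → A))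
        = (k - 1) ^ m * k ^ (p - m - 1) := by
      intro y
      rw [Fintype.card_prod, Fintype.card_fun, Fintype.card_fun,
        card_lt_subtype p m hm, card_gt_subtype p m hm, hA]
      have hne : Fintype.card {a : A // a ≠ y} = k - 1 := by
        have h2 := Fintype.card_subtype_compl (fun a : A => a = y)
        simpa [Fintype.card_subtype_eq, hA] using h2
      rw [hne]
    simp [this, hA, Finset.sum_const]
  have hinj : ∃ Φ : D → {c : Fin p → A // ∀ q : Fin p, (q : ℕ) < m → c ⟨m, hm⟩ ≠ c q},
      Function.Injective Φ := by
    refine ⟨fun d => ⟨fun q => if h1 : (q : ℕ) < m then (d.2.1 ⟨q, h1⟩ : A)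
      else if h2 : m < (q : ℕ) then d.2.2 ⟨q, h2⟩ else d.1, by
        intro q hq
        simp only [dif_pos hq, dif_neg (lt_irrefl m)]
        exact fun h => (d.2.1 ⟨q, hq⟩).2 h.symm⟩, ?_⟩
    rintro ⟨y, f, g⟩ ⟨y', f', g'⟩ h
    simp only [Subtype.mk.injEq] at h
    have hy : y = y' := by
      have := congrFun h ⟨m, hm⟩
      simpa [dif_neg (lt_irrefl m)] using this
    subst hy
    have hf : f = f' := by
      funext q
      have := congrFun h ⟨q.1.1, lt_trans q.2 hm⟩
      apply Subtype.ext
      simpa [dif_pos q.2] using this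
    have hg : g = g' := by
      funext q
      have := congrFun h q.1
      simpa [dif_neg (not_lt.mpr (le_of_lt q.2)), dif_pos q.2] using this
    simp [hf, hg]
  obtain ⟨Φ, hΦ⟩ := hinj
  have := Fintype.card_le_of_injective Φ hΦ
  rw [hcardD] at this
  have hEq : k * ((k - 1) ^ m * k ^ (p - m - 1)) = (k - 1) ^ m * k ^ (p - m) := by
    rw [hs', hs, pow_succ]
    ring
  exact le_trans (le_of_eq hEq.symm) this

lemma nat_combine (k p B G T X : ℕ) (hgood : X ≤ G) (hcompl : G = T - B)
    (htot : T = k ^ p) (hBle : B ≤ T) : B + X ≤ k ^ p := by omega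

theorem stmt13 {A : Type*} [Fintype A] [DecidableEq A]
    (k n p : ℕ) (hk : 2 ≤ k) (hcard : Fintype.card A = k)
    (hn : 0 < n) (hp : 2 ≤ p) (hpk : p ≤ k ^ n) (hplog : (p : ℝ) ≤ Real.log n) :
    (1 : ℝ) - Real.log n *
        Real.exp (-((n : ℝ) ^ ((1 : ℝ) + Real.log (((k : ℝ) - 1) / k)))) ≤
      (Nat.card {t : Fin p → Fin n → A // OneSep t} : ℝ) /
        (Nat.card (Fin p → Fin n → A) : ℝ) := by
  classical
  have hk0 : (0:ℝ) < k := by positivity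
  set r : ℝ := ((k:ℝ) - 1) / k with hr
  have hr0 : 0 < r := by
    apply div_pos _ hk0
    have : (2:ℝ) ≤ k := by exact_mod_cast hk
    linarith
  have hr1 : r ≤ 1 := by
    rw [hr, div_le_one hk0]; linarith
  set E : ℝ := Real.exp (-((n : ℝ) ^ ((1 : ℝ) + Real.log r))) with hE
  set K : ℝ := ((k:ℝ)) ^ (n * p) with hK
  have hK0 : 0 < K := by positivity
  -- total count
  have hΩ : Nat.card (Fin p → Fin n → A) = k ^ (n * p) := by
    rw [Nat.card_eq_fintype_card, Fintype.card_fun, Fintype.card_fun, hcard,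
      Fintype.card_fin, Fintype.card_fin, ← pow_mul]
  -- the key per-j bound
  have key : ∀ j : Fin p, 1 ≤ (j:ℕ) →
      ((univ.filter (fun t : Fin p → Fin n → A =>
          ∀ i : Fin n, ∃ q : Fin p, (q:ℕ) < (j:ℕ) ∧ t j i = t q i)).card : ℝ) ≤ E * K := by
    intro j hj
    set m : ℕ := (j:ℕ) with hmdef
    have hm : m < p := j.isLt
    -- column bad count
    have hcardF : (univ.filter (fun t : Fin p → Fin n → A =>
        ∀ i : Fin n, ∃ q : Fin p, (q:ℕ) < m ∧ t j i = t q i)).card =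
        (Fintype.card {c : Fin p → A // ∃ q : Fin p, (q:ℕ) < m ∧ c ⟨m, hm⟩ = c q}) ^ n := by
      rw [← Fintype.card_subtype]
      have e : {t : Fin p → Fin n → A //
          ∀ i : Fin n, ∃ q : Fin p, (q:ℕ) < m ∧ t j i = t q i} ≃
          (Fin n → {c : Fin p → A // ∃ q : Fin p, (q:ℕ) < m ∧ c ⟨m, hm⟩ = c q}) :=
        { toFun := fun t => fun i => ⟨fun q => t.1 q i, t.2 i⟩
          invFun := fun f => ⟨fun q i => (f i).1 q, fun i => (f i).2⟩
          left_inv := fun t => rfl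
          right_inv := fun f => rfl }
      rw [Fintype.card_congr e, Fintype.card_fun, Fintype.card_fin]
    -- bound B
    have hgoodcard : Fintype.card {c : Fin p → A //
        ¬ ∃ q : Fin p, (q:ℕ) < m ∧ c ⟨m, hm⟩ = c q} =
        Fintype.card {c : Fin p → A // ∀ q : Fin p, (q:ℕ) < m → c ⟨m, hm⟩ ≠ c q} := by
      apply Fintype.card_congr
      apply Equiv.subtypeEquivRight
      intro c
      push_neg
      rfl
    have hgood := good_col_lb k p m hcard (one_le_two.trans hk) hm
    have hcompl := Fintype.card_subtype_compl
      (fun c : Fin p → A => ∃ q : Fin p, (q:ℕ) < m ∧ c ⟨m, hm⟩ = c q)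
    have htot : Fintype.card (Fin p → A) = k ^ p := by
      rw [Fintype.card_fun, hcard, Fintype.card_fin]
    have hBnat : Fintype.card {c : Fin p → A // ∃ q : Fin p, (q:ℕ) < m ∧ c ⟨m, hm⟩ = c q}
        + (k - 1) ^ m * k ^ (p - m) ≤ k ^ p := by
      rw [hgoodcard] at hcompl
      exact nat_combine k p _ _ _ _ hgood hcompl htot (Fintype.card_subtype_le _)
    set B : ℕ := Fintype.card {c : Fin p → A // ∃ q : Fin p, (q:ℕ) < m ∧ c ⟨m, hm⟩ = c q}
      with hBdef
    clear_value B
    -- cast to ℝ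
    have hcast : ((k - 1 : ℕ) : ℝ) = (k:ℝ) - 1 := by
      have h1k : (1:ℕ) ≤ k := one_le_two.trans hk
      push_cast [Nat.cast_sub h1k]
      ring
    have hkp : ((k:ℝ)) ^ p = (k:ℝ) ^ m * (k:ℝ) ^ (p - m) := by
      rw [← pow_add]
      congr 1
      exact (Nat.add_sub_cancel' (le_of_lt hm)).symm
    have e1 : r ^ m * ((k:ℝ)) ^ p = ((k:ℝ) - 1) ^ m * (k:ℝ) ^ (p - m) := by
      rw [hkp, hr, div_pow]
      field_simp
    have hBreal : (B:ℝ) ≤ (1 - r ^ m) * (k:ℝ) ^ p := by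
      have h1 : (B:ℝ) + ((k:ℝ) - 1) ^ m * (k:ℝ) ^ (p - m) ≤ (k:ℝ) ^ p := by
        have := hBnat
        have h2 : ((B + (k - 1) ^ m * k ^ (p - m) : ℕ) : ℝ) ≤ ((k ^ p : ℕ) : ℝ) := by
          exact_mod_cast this
        push_cast [hcast] at h2
        linarith
      nlinarith [e1]
    -- now the analytic chain
    have hrm1 : r ^ m ≤ 1 := pow_le_one₀ hr0.le hr1
    have hrpm : r ^ p ≤ r ^ m := pow_le_pow_of_le_one hr0.le hr1 (le_of_lt hm)
    have hrp1 : r ^ p ≤ 1 := pow_le_one₀ hr0.le hr1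
    have hstep1 : ((B:ℝ)) ^ n ≤ ((1 - r ^ p) * (k:ℝ) ^ p) ^ n := by
      apply pow_le_pow_left₀ (by positivity)
      calc (B:ℝ) ≤ (1 - r ^ m) * (k:ℝ) ^ p := hBreal
        _ ≤ (1 - r ^ p) * (k:ℝ) ^ p := by
            apply mul_le_mul_of_nonneg_right _ (by positivity)
            linarith
    have hexp1 : (1 - r ^ p) ≤ Real.exp (-(r ^ p)) := by
      have := Real.add_one_le_exp (-(r ^ p))
      linarith
    have hstep2 : ((1 - r ^ p)) ^ n ≤ Real.exp (-((n:ℝ) * r ^ p)) := by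
      calc ((1 - r ^ p)) ^ n ≤ (Real.exp (-(r ^ p))) ^ n :=
            pow_le_pow_left₀ (by linarith) hexp1 n
        _ = Real.exp (-((n:ℝ) * r ^ p)) := by
            rw [← Real.exp_nat_mul]
            congr 1
            ring
    have hn0 : (0:ℝ) < n := by exact_mod_cast hn
    have hrlog : (n:ℝ) ^ ((1:ℝ) + Real.log r) ≤ (n:ℝ) * r ^ p := by
      have h1 : (n:ℝ) ^ ((1:ℝ) + Real.log r) = (n:ℝ) * (n:ℝ) ^ (Real.log r) := by
        rw [Real.rpow_add hn0, Real.rpow_one]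
      have h2 : (n:ℝ) ^ (Real.log r) = r ^ (Real.log n) := by
        rw [Real.rpow_def_of_pos hn0, Real.rpow_def_of_pos hr0, mul_comm]
      have h3 : r ^ (Real.log n) ≤ r ^ ((p:ℝ)) :=
        Real.rpow_le_rpow_of_exponent_ge hr0 hr1 hplog
      have h4 : r ^ ((p:ℝ)) = r ^ p := by
        rw [Real.rpow_natCast]
      rw [h1, h2]
      calc (n:ℝ) * r ^ (Real.log n) ≤ (n:ℝ) * r ^ ((p:ℝ)) := by
            apply mul_le_mul_of_nonneg_left h3 hn0.le
        _ = (n:ℝ) * r ^ p := by rw [h4]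
    have hstep3 : Real.exp (-((n:ℝ) * r ^ p)) ≤ E := by
      rw [hE]
      apply Real.exp_le_exp.mpr
      linarith
    -- combine
    rw [hcardF]
    push_cast
    calc ((B:ℝ)) ^ n ≤ ((1 - r ^ p) * (k:ℝ) ^ p) ^ n := hstep1
      _ = ((1 - r ^ p)) ^ n * ((k:ℝ) ^ p) ^ n := mul_pow _ _ _
      _ ≤ E * ((k:ℝ) ^ p) ^ n := by
          apply mul_le_mul_of_nonneg_right _ (by positivity)
          exact le_trans hstep2 hstep3
      _ = E * K := by rw [hK, ← pow_mul, Nat.mul_comm]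
  -- union bound
  set F : Fin p → Finset (Fin p → Fin n → A) := fun j =>
    univ.filter (fun t => ∀ i : Fin n, ∃ q : Fin p, (q:ℕ) < (j:ℕ) ∧ t j i = t q i) with hF
  have hsub : univ.filter (fun t : Fin p → Fin n → A => ¬ OneSep t) ⊆
      (univ.filter (fun j : Fin p => 1 ≤ (j:ℕ))).biUnion F := by
    intro t ht
    simp only [mem_filter, mem_univ, true_and] at ht
    rw [OneSep] at ht
    push_neg at ht
    obtain ⟨j, hj1, hall⟩ := ht
    simp only [Finset.mem_biUnion, mem_filter, mem_univ, true_and, hF]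
    refine ⟨j, hj1, ?_⟩
    intro i
    obtain ⟨q, hq, hqq⟩ := hall i
    exact ⟨q, hq, hqq⟩
  have hbadcard : ((univ.filter (fun t : Fin p → Fin n → A => ¬ OneSep t)).card : ℝ) ≤
      Real.log n * E * K := by
    have h1 : (univ.filter (fun t : Fin p → Fin n → A => ¬ OneSep t)).card ≤
        ∑ j ∈ univ.filter (fun j : Fin p => 1 ≤ (j:ℕ)), (F j).card :=
      le_trans (Finset.card_le_card hsub) (Finset.card_biUnion_le)
    have h2 : ((∑ j ∈ univ.filter (fun j : Fin p => 1 ≤ (j:ℕ)), (F j).card : ℕ) : ℝ) ≤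
        ∑ j ∈ univ.filter (fun j : Fin p => 1 ≤ (j:ℕ)), (E * K) := by
      push_cast
      apply Finset.sum_le_sum
      intro j hj
      simp only [mem_filter, mem_univ, true_and] at hj
      exact key j hj
    have h3 : ∑ j ∈ univ.filter (fun j : Fin p => 1 ≤ (j:ℕ)), (E * K) ≤ (p:ℝ) * (E * K) := by
      rw [Finset.sum_const, nsmul_eq_mul]
      apply mul_le_mul_of_nonneg_right _ (by positivity)
      have : (univ.filter (fun j : Fin p => 1 ≤ (j:ℕ))).card ≤ p := by
        calc (univ.filter (fun j : Fin p => 1 ≤ (j:ℕ))).card ≤ (univ : Finset (Fin p)).card :=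
              Finset.card_le_card (Finset.filter_subset _ _)
          _ = p := by simp
      exact_mod_cast this
    have h4 : (p:ℝ) * (E * K) ≤ Real.log n * (E * K) := by
      apply mul_le_mul_of_nonneg_right hplog (by positivity)
    calc ((univ.filter (fun t : Fin p → Fin n → A => ¬ OneSep t)).card : ℝ)
        ≤ ((∑ j ∈ univ.filter (fun j : Fin p => 1 ≤ (j:ℕ)), (F j).card : ℕ) : ℝ) := by
          exact_mod_cast h1
      _ ≤ ∑ j ∈ univ.filter (fun j : Fin p => 1 ≤ (j:ℕ)), (E * K) := h2
      _ ≤ (p:ℝ) * (E * K) := h3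
      _ ≤ Real.log n * (E * K) := h4
      _ = Real.log n * E * K := by ring
  -- conclude
  have hSsplit : (univ.filter (fun t : Fin p → Fin n → A => OneSep t)).card +
      (univ.filter (fun t : Fin p → Fin n → A => ¬ OneSep t)).card = k ^ (n * p) := by
    rw [Finset.card_filter_add_card_filter_not]
    rw [Finset.card_univ, Fintype.card_fun, Fintype.card_fun, hcard,
      Fintype.card_fin, Fintype.card_fin, ← pow_mul]
  have hS : (Nat.card {t : Fin p → Fin n → A // OneSep t} : ℝ) =
      ((univ.filter (fun t : Fin p → Fin n → A => OneSep t)).card : ℝ) := by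
    rw [Nat.card_eq_fintype_card, Fintype.card_subtype]
  have hKnat : ((Nat.card (Fin p → Fin n → A)) : ℝ) = K := by
    rw [hΩ, hK]
    push_cast
    ring
  rw [hS, hKnat, le_div_iff₀ hK0]
  have hsplitR : ((univ.filter (fun t : Fin p → Fin n → A => OneSep t)).card : ℝ) +
      ((univ.filter (fun t : Fin p → Fin n → A => ¬ OneSep t)).card : ℝ) = K := by
    have h := congrArg (fun x : ℕ => (x : ℝ)) hSsplit
    push_cast at h
    rw [hK]
    linarith
  rw [sub_mul, one_mul]
  linarith [hbadcard]
end

section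
/- Let A be a finite set with |A| ≥ 2 and n a positive integer. Then: (a) every nonempty G ⊆ A^n has separation index s(G) ≤ n; and (b) s(A^n) = n, i.e., the full hypercube A^n is n-separated and not (n−1)-separated. -/
/-- A tuple `(t₁,…,t_p)` of elements of `A^n` is `ℓ`-separated if for every `j ≥ 2`
there is a set `I` of `ℓ` coordinates such that every earlier `t_q` differs from `t_j`
at some coordinate of `I`. -/
def SepTuple {A : Type*} {n p : ℕ} (ℓ : ℕ) (t : Fin p → Fin n → A) : Prop :=
  ∀ j : Fin p, 1 ≤ (j : ℕ) → ∃ I : Finset (Fin n), I.card = ℓ ∧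
    ∀ q : Fin p, (q : ℕ) < (j : ℕ) → ∃ i ∈ I, t j i ≠ t q i

/-- The separation index of a nonempty finite set: the minimum over all enumerations. -/
noncomputable def sepIndexSet {A : Type*} [DecidableEq A] {n : ℕ}
    (G : Finset (Fin n → A)) : ℕ :=
  sInf {ℓ | 0 < ℓ ∧ ∃ t : Fin G.card → Fin n → A,
    Function.Injective t ∧ (∀ j, t j ∈ G) ∧ SepTuple ℓ t}

lemma n_mem_sep {A : Type*} [DecidableEq A] {n : ℕ} (hn : 0 < n)
    (G : Finset (Fin n → A)) :
    n ∈ {ℓ | 0 < ℓ ∧ ∃ t : Fin G.card → Fin n → A,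
      Function.Injective t ∧ (∀ j, t j ∈ G) ∧ SepTuple ℓ t} := by
  refine ⟨hn, fun j => (G.equivFin.symm j : Fin n → A), ?_, fun j => (G.equivFin.symm j).2, ?_⟩
  · intro a b hab
    exact G.equivFin.symm.injective (Subtype.ext hab)
  · intro j hj
    refine ⟨Finset.univ, by simp, fun q hq => ?_⟩
    have hne : (G.equivFin.symm j : Fin n → A) ≠ (G.equivFin.symm q : Fin n → A) := by
      intro h
      have hjq := G.equivFin.symm.injective (Subtype.ext h)
      rw [hjq] at hq
      exact lt_irrefl _ hq
    rcases Function.ne_iff.mp hne with ⟨i, hi⟩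
    exact ⟨i, Finset.mem_univ i, hi⟩

theorem stmt14 {A : Type*} [Fintype A] [DecidableEq A]
    (hA : 2 ≤ Fintype.card A) {n : ℕ} (hn : 0 < n) :
    (∀ G : Finset (Fin n → A), G.Nonempty → sepIndexSet G ≤ n) ∧
    sepIndexSet (Finset.univ : Finset (Fin n → A)) = n := by
  constructor
  · intro G _
    exact Nat.sInf_le (n_mem_sep hn G)
  · refine le_antisymm (Nat.sInf_le (n_mem_sep hn _)) ?_
    refine le_csInf ⟨n, n_mem_sep hn _⟩ ?_
    rintro ℓ ⟨hℓ0, t, ht_inj, -, ht_sep⟩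
    by_contra hlt
    push_neg at hlt
    have hpcard : (Finset.univ : Finset (Fin n → A)).card = Fintype.card A ^ n := by
      simp [Fintype.card_fun]
    have hp2 : 2 ≤ (Finset.univ : Finset (Fin n → A)).card := by
      rw [hpcard]
      calc 2 = 2 ^ 1 := by norm_num
        _ ≤ 2 ^ n := Nat.pow_le_pow_right (by omega) hn
        _ ≤ Fintype.card A ^ n := Nat.pow_le_pow_left hA n
    have ht_surj : Function.Surjective t := by
      have hc : Fintype.card (Fin (Finset.univ : Finset (Fin n → A)).card)
          = Fintype.card (Fin n → A) := by
        simp [hpcard, Fintype.card_fun]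
      exact ((Fintype.bijective_iff_injective_and_card t).mpr ⟨ht_inj, hc⟩).2
    set j : Fin (Finset.univ : Finset (Fin n → A)).card :=
      ⟨(Finset.univ : Finset (Fin n → A)).card - 1, by omega⟩ with hj
    obtain ⟨I, hIcard, hI⟩ := ht_sep j (by simp [hj]; omega)
    have hInotuniv : ∃ i₀ : Fin n, i₀ ∉ I := by
      by_contra h
      push_neg at h
      have : I = Finset.univ := Finset.eq_univ_iff_forall.mpr h
      rw [this] at hIcard
      simp at hIcard
      omega
    obtain ⟨i₀, hi₀⟩ := hInotuniv
    have : Nontrivial A := Fintype.one_lt_card_iff_nontrivial.mp (by omega)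
    obtain ⟨a, ha⟩ := exists_ne (t j i₀)
    obtain ⟨q, hq⟩ := ht_surj (Function.update (t j) i₀ a)
    have hqne : q ≠ j := by
      intro h
      rw [h] at hq
      have := congrFun hq i₀
      simp [Function.update_self] at this
      exact ha this.symm
    have hqlt : (q : ℕ) < (j : ℕ) := by
      have h1 := q.isLt
      have h2 : (q : ℕ) ≠ (j : ℕ) := fun h => hqne (Fin.ext h)
      simp only [hj] at h2 ⊢
      omega
    obtain ⟨i, hiI, hi⟩ := hI q hqlt
    have hii₀ : i ≠ i₀ := fun h => hi₀ (h ▸ hiI)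
    apply hi
    rw [hq, Function.update_of_ne hii₀]
end

section
/- Let A be a finite set with |A| ≥ 2, let n, ℓ be positive integers with n ≥ ℓ, let r = (r₁,…,r_ℓ) be positive integers with n = r₁ + ⋯ + r_ℓ, and let ⟨S_t : t ∈ A^n⟩ be any (ℓ, r)-simplicial process in a probability space. Then there exist a nonempty G ⊆ A^n and x ∈ A^n \ G such that G ∪ {x} is ℓ-separated and ⋂_{t ∈ G ∪ {x}} S_t = ⋂_{t ∈ G} S_t. In particular, the events ⟨S_t : t ∈ A^n⟩ are not independent (assuming 0 < P(S_t) < 1). -/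
open MeasureTheory

/-- The `l`-th of the successive intervals `I₁,…,I_ℓ` of `[n]` with `|I_l| = r l`. -/
def blockOf {ℓ : ℕ} (r : Fin ℓ → ℕ) (n : ℕ) (l : Fin ℓ) : Finset (Fin n) :=
  Finset.univ.filter (fun i : Fin n =>
    ∑ l' ∈ Finset.Iio l, r l' ≤ (i : ℕ) ∧ (i : ℕ) < ∑ l' ∈ Finset.Iic l, r l')

/-- `(α,β,I)`-equivalence: agree off `I`, and on `I` agree at coordinates whose value is
outside `{α, β}`. -/
def EquivABI {A : Type*} {n : ℕ} (α β : A) (I : Finset (Fin n)) (s t : Fin n → A) : Prop :=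
  (∀ i ∉ I, s i = t i) ∧
    ∀ i ∈ I, ∀ γ : A, γ ≠ α → γ ≠ β → (s i = γ ↔ t i = γ)

/-- An `(α,β,I)`-insensitive process. -/
def InsensitiveOn {A Ω : Type*} {n : ℕ} (α β : A) (I : Finset (Fin n))
    (E : (Fin n → A) → Set Ω) : Prop :=
  ∀ s t : Fin n → A, EquivABI α β I s t → E s = E t

/-- An `(ℓ, r)`-simplicial process on `A^n`. -/
def IsSimplicial {A Ω : Type*} {n ℓ : ℕ} (r : Fin ℓ → ℕ)
    (S : (Fin n → A) → Set Ω) : Prop :=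
  ∃ (β : Fin ℓ → A) (Γ : Fin ℓ → Finset A)
    (E : (l : Fin ℓ) → A → (Fin n → A) → Set Ω),
    (∀ l, (Γ l).Nonempty) ∧ (∀ l, ∀ α ∈ Γ l, α ≠ β l) ∧
    (∀ l, ∀ α ∈ Γ l, InsensitiveOn α (β l) (blockOf r n l) (E l α)) ∧
    ∀ t : Fin n → A, S t = ⋂ l, ⋂ α ∈ Γ l, E l α t

/-!
Let `b` send each coordinate to its block, write `S t = ⋂ l, ⋂ α ∈ Γ l, E l α t`, and take
`x = β ∘ b` and `G` the remaining points of `∏ l, ({β l} ∪ Γ l)` pulled back along `b`.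
For `α ∈ Γ l` the neighbour `update β l α ∘ b ∈ G` is `(α, β l, I_l)`-equivalent to `x`, so
`S (update β l α ∘ b) ⊆ E l α (update β l α ∘ b) = E l α x`; hence `⋂ t ∈ G, S t ⊆ S x`.
The points of `G ∪ {x}` are constant on blocks, so one representative coordinate per block
separates every enumeration; conversely the last point of any enumeration has an earlier
neighbour in each block direction, so a separating set meets all `ℓ` blocks.
Independence would force `P (S x) = 1`.
-/

open Finset Function

section Blocks

variable {ℓ n : ℕ} {r : Fin ℓ → ℕ} {i : Fin n} {l m : Fin ℓ}

theorem mem_blockOf :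
    i ∈ blockOf r n l ↔
      ∑ l' ∈ Iio l, r l' ≤ (i : ℕ) ∧ (i : ℕ) < ∑ l' ∈ Iic l, r l' := by
  simp [blockOf]

theorem eq_of_mem_blockOf (hl : i ∈ blockOf r n l) (hm : i ∈ blockOf r n m) : l = m := by
  have hnlt : ∀ {l m : Fin ℓ}, i ∈ blockOf r n l → i ∈ blockOf r n m → ¬ l < m := by
    intro l m hl hm hlm
    have : ∑ l' ∈ Iic l, r l' ≤ ∑ l' ∈ Iio m, r l' :=
      sum_le_sum_of_subset fun k hk => mem_Iio.2 ((mem_Iic.1 hk).trans_lt hlm)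
    have := (mem_blockOf.1 hl).2
    have := (mem_blockOf.1 hm).1
    omega
  exact le_antisymm (not_lt.1 (hnlt hm hl)) (not_lt.1 (hnlt hl hm))

theorem exists_mem_blockOf (hrsum : ∑ l, r l = n) (i : Fin n) : ∃ l, i ∈ blockOf r n l := by
  have descend : ∀ l : Fin ℓ, (i : ℕ) < ∑ l' ∈ Iic l, r l' → ∃ l, i ∈ blockOf r n l := by
    intro l
    induction l using WellFoundedLT.induction with
    | ind l ih =>
      intro hi
      by_cases hlo : ∑ l' ∈ Iio l, r l' ≤ (i : ℕ)
      · exact ⟨l, mem_blockOf.2 ⟨hlo, hi⟩⟩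
      have hl : ¬ IsMin l := fun hl => hlo (by simp [hl.finsetIio_eq])
      rw [← Iic_pred_eq_Iio_of_not_isMin hl] at hlo
      exact ih _ (Order.pred_lt_of_not_isMin hl) (not_le.1 hlo)
  obtain ⟨k, rfl⟩ : ∃ k, ℓ = k + 1 :=
    Nat.exists_eq_succ_of_ne_zero fun h => by subst h; have := i.2; simp at hrsum; omega
  exact descend ⊤ (by rw [Iic_top, hrsum]; exact i.2)

theorem blockOf_nonempty (hr : 0 < r l) (hrsum : ∑ l, r l = n) : (blockOf r n l).Nonempty := by
  have hlt : ∑ l' ∈ Iio l, r l' < ∑ l' ∈ Iic l, r l' := by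
    rw [← sum_Iio_add_eq_sum_Iic]; omega
  have hle : ∑ l' ∈ Iic l, r l' ≤ n := hrsum ▸ sum_le_sum_of_subset (subset_univ _)
  exact ⟨⟨_, hlt.trans_le hle⟩, mem_blockOf.2 ⟨le_rfl, hlt⟩⟩

theorem exists_surjective_blockIndex (hr : ∀ l, 0 < r l) (hrsum : ∑ l, r l = n) :
    ∃ b : Fin n → Fin ℓ, Surjective b ∧ ∀ i l, b i = l ↔ i ∈ blockOf r n l := by
  choose b hb using exists_mem_blockOf hrsum
  have hb' : ∀ i l, b i = l ↔ i ∈ blockOf r n l :=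
    fun i l => ⟨fun h => h ▸ hb i, eq_of_mem_blockOf (hb i)⟩
  refine ⟨b, fun l => ?_, hb'⟩
  obtain ⟨i, hi⟩ := blockOf_nonempty (hr l) hrsum
  exact ⟨i, (hb' i l).2 hi⟩

end Blocks

section Separation

variable {A : Type*} {n ℓ : ℕ}

theorem exists_sepTuple_of_eqOn (T : Finset (Fin n → A)) (I : Finset (Fin n))
    (hI : ∀ x ∈ T, ∀ y ∈ T, (∀ i ∈ I, x i = y i) → x = y) :
    ∃ t : Fin T.card → Fin n → A, Injective t ∧ (∀ j, t j ∈ T) ∧ SepTuple I.card t := by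
  have ht : Injective fun j => (T.equivFin.symm j : Fin n → A) :=
    Subtype.coe_injective.comp T.equivFin.symm.injective
  refine ⟨_, ht, fun j => (T.equivFin.symm j).2, fun j _ => ⟨I, rfl, fun q hq => ?_⟩⟩
  by_contra! heq
  exact hq.ne (congrArg Fin.val (ht (hI _ (T.equivFin.symm q).2 _ (T.equivFin.symm j).2
    fun i hi => (heq i hi).symm)))

theorem SepTuple.le_of_flips {T : Finset (Fin n → A)} (hT : T.Nonempty)
    (b : Fin n → Fin ℓ)
    (hflip : ∀ x ∈ T, ∀ l, ∃ y ∈ T, y ≠ x ∧ ∀ i, x i ≠ y i → b i = l)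
    {m : ℕ} {t : Fin T.card → Fin n → A} (ht : Injective t) (htT : ∀ j, t j ∈ T)
    (hsep : SepTuple m t) : ℓ ≤ m := by
  rcases Nat.eq_zero_or_pos ℓ with rfl | hℓ
  · exact Nat.zero_le m
  have hsurj : ∀ y ∈ T, ∃ q, t q = y := by
    have hbij : Bijective fun j => (⟨t j, htT j⟩ : T) :=
      (Fintype.bijective_iff_injective_and_card _).2
        ⟨fun j k h => ht (congrArg Subtype.val h), by simp⟩
    intro y hy
    obtain ⟨q, hq⟩ := hbij.2 ⟨y, hy⟩
    exact ⟨q, congrArg Subtype.val hq⟩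
  let last : Fin T.card := ⟨T.card - 1, Nat.sub_lt hT.card_pos one_pos⟩
  have hflip_lt : ∀ l, ∃ q : Fin T.card, (q : ℕ) < last ∧ ∀ i, t last i ≠ t q i → b i = l := by
    intro l
    obtain ⟨y, hyT, hne, hy⟩ := hflip _ (htT last) l
    obtain ⟨q, rfl⟩ := hsurj y hyT
    have hq : q ≠ last := fun h => hne (h ▸ rfl)
    exact ⟨q, lt_of_le_of_ne (Nat.le_sub_one_of_lt q.2) (Fin.val_ne_of_ne hq), hy⟩
  have hlast : 1 ≤ (last : ℕ) := by
    obtain ⟨q, hq, -⟩ := hflip_lt ⟨0, hℓ⟩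
    omega
  obtain ⟨I, hIm, hI⟩ := hsep last hlast
  have hcover : (univ : Finset (Fin ℓ)) ⊆ I.image b := by
    intro l _
    obtain ⟨q, hq, hql⟩ := hflip_lt l
    obtain ⟨i, hiI, hi⟩ := hI q hq
    exact mem_image.2 ⟨i, hiI, hql i hi⟩
  simpa [hIm] using (card_le_card hcover).trans card_image_le

theorem sepIndexSet_eq_of_forall [DecidableEq A] {T : Finset (Fin n → A)} (hℓ : 0 < ℓ)
    (hex : ∃ t : Fin T.card → Fin n → A, Injective t ∧ (∀ j, t j ∈ T) ∧ SepTuple ℓ t)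
    (hle : ∀ m (t : Fin T.card → Fin n → A), Injective t → (∀ j, t j ∈ T) →
      SepTuple m t → ℓ ≤ m) :
    sepIndexSet T = ℓ :=
  le_antisymm (Nat.sInf_le ⟨hℓ, hex⟩)
    (le_csInf ⟨ℓ, hℓ, hex⟩ fun _ ⟨_, t, ht, htT, hsep⟩ => hle _ t ht htT hsep)

theorem sepIndexSet_image_comp_piFinset [DecidableEq A] {b : Fin n → Fin ℓ}
    (hb : Surjective b) (hℓ : 0 < ℓ) {V : Fin ℓ → Finset A} (hV : ∀ l, 1 < (V l).card) :
    sepIndexSet ((Fintype.piFinset V).image (· ∘ b)) = ℓ := by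
  set rep := surjInv hb
  have hrep : ∀ l, b (rep l) = l := surjInv_eq hb
  have hcomp : Injective fun g : Fin ℓ → A => g ∘ b := hb.injective_comp_right
  refine sepIndexSet_eq_of_forall hℓ ?_ fun m t ht htT hsep => ?_
  · obtain ⟨t, ht, htT, hsep⟩ := exists_sepTuple_of_eqOn
      ((Fintype.piFinset V).image (· ∘ b)) (univ.image rep) <| by
        simp only [mem_image, forall_exists_index, and_imp, forall_apply_eq_imp_iff₂]
        intro g _ g' _ h
        exact congrArg (· ∘ b) (funext fun l => by simpa [hrep] using h l (mem_univ l))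
    rw [card_image_of_injective _ (injective_surjInv hb), card_univ, Fintype.card_fin] at hsep
    exact ⟨t, ht, htT, hsep⟩
  · refine SepTuple.le_of_flips ?_ b ?_ ht htT hsep
    · exact (Fintype.piFinset_nonempty.2 fun l => card_pos.1 (one_pos.trans (hV l))).image _
    simp only [mem_image, Fintype.mem_piFinset, forall_exists_index, and_imp,
      forall_apply_eq_imp_iff₂]
    intro g hg l
    obtain ⟨a, ha, hne⟩ := exists_mem_ne (hV l) (g l)
    refine ⟨update g l a ∘ b, ⟨update g l a, fun k => ?_, rfl⟩, ?_, fun i hi => ?_⟩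
    · rcases eq_or_ne k l with rfl | hk
      · simpa using ha
      · simpa [update_of_ne hk] using hg k
    · exact hcomp.ne fun h => hne (by simpa using congrFun h l)
    · by_contra hil
      exact hi (by simp [update_of_ne hil])

end Separation

section Simplicial

variable {A Ω : Type*} {n ℓ : ℕ}

theorem InsensitiveOn.apply_update_comp {α β : A} {I : Finset (Fin n)}
    {E : (Fin n → A) → Set Ω} (hE : InsensitiveOn α β I E) {b : Fin n → Fin ℓ} {l : Fin ℓ}
    (hb : ∀ i, b i = l ↔ i ∈ I) {g : Fin ℓ → A} (hg : g l = β) :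
    E (update g l α ∘ b) = E (g ∘ b) := by
  refine hE _ _ ⟨fun i hi => ?_, fun i hi γ hγα hγβ => ?_⟩
  · simp [update_of_ne (mt (hb i).1 hi)]
  · simp only [comp_apply, (hb i).2 hi, update_self, hg]
    exact ⟨fun h => absurd h.symm hγα, fun h => absurd h.symm hγβ⟩

theorem IsSimplicial.exists_iInter_update_subset {r : Fin ℓ → ℕ}
    {S : (Fin n → A) → Set Ω} (hS : IsSimplicial r S) {b : Fin n → Fin ℓ}
    (hb : ∀ i l, b i = l ↔ i ∈ blockOf r n l) :
    ∃ (β : Fin ℓ → A) (Γ : Fin ℓ → Finset A), (∀ l, (Γ l).Nonempty) ∧ (∀ l, β l ∉ Γ l) ∧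
      ⋂ l, ⋂ a ∈ Γ l, S (update β l a ∘ b) ⊆ S (β ∘ b) := by
  obtain ⟨β, Γ, E, hΓ, hΓβ, hE, hSE⟩ := hS
  refine ⟨β, Γ, hΓ, fun l hl => hΓβ l _ hl rfl, ?_⟩
  rw [hSE]
  refine Set.subset_iInter₂ fun l a => Set.subset_iInter fun ha => ?_
  rw [← (hE l a ha).apply_update_comp (hb · l) rfl]
  calc ⋂ k, ⋂ c ∈ Γ k, S (update β k c ∘ b)
      _ ⊆ S (update β l a ∘ b) := (Set.iInter_subset _ l).trans (Set.iInter₂_subset a ha)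
      _ = ⋂ k, ⋂ c ∈ Γ k, E k c (update β l a ∘ b) := hSE _
      _ ⊆ E l a (update β l a ∘ b) := (Set.iInter_subset _ l).trans (Set.iInter₂_subset a ha)

end Simplicial

theorem ProbabilityTheory.iIndepSet.measure_eq_one_of_biInter_insert_eq {ι Ω : Type*}
    [DecidableEq ι] [MeasurableSpace Ω] {P : Measure Ω} [IsFiniteMeasure P] {S : ι → Set Ω}
    (h : iIndepSet S P) {G : Finset ι} {x : ι} (hx : x ∉ G) (hG : ∀ t ∈ G, P (S t) ≠ 0)
    (heq : ⋂ t ∈ insert x G, S t = ⋂ t ∈ G, S t) : P (S x) = 1 := by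
  have hprod := h.meas_biInter (insert x G)
  rw [heq, h.meas_biInter G, prod_insert hx] at hprod
  exact (ENNReal.mul_eq_right (prod_ne_zero_iff.2 hG)
    (ENNReal.prod_ne_top fun t _ => measure_ne_top P _)).1 hprod.symm

theorem stmt16_general {A Ω : Type*} [DecidableEq A] [MeasurableSpace Ω]
    {n ℓ : ℕ} (hℓ : 0 < ℓ)
    (r : Fin ℓ → ℕ) (hr : ∀ l, 0 < r l) (hrsum : ∑ l, r l = n)
    (P : Measure Ω) [IsProbabilityMeasure P]
    (S : (Fin n → A) → Set Ω)
    (hS : IsSimplicial r S) (hP : ∀ t, 0 < P (S t) ∧ P (S t) < 1) :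
    ∃ (G : Finset (Fin n → A)) (x : Fin n → A), G.Nonempty ∧ x ∉ G ∧
      sepIndexSet (insert x G) = ℓ ∧
      (⋂ t ∈ insert x G, S t) = (⋂ t ∈ G, S t) ∧
      ¬ ProbabilityTheory.iIndepSet S P := by
  obtain ⟨b, hbs, hb⟩ := exists_surjective_blockIndex hr hrsum
  obtain ⟨β, Γ, hΓ, hβΓ, hsub⟩ := hS.exists_iInter_update_subset hb
  set T := (Fintype.piFinset fun l => insert (β l) (Γ l)).image (· ∘ b)
  have hβT : β ∘ b ∈ T := mem_image_of_mem _ (Fintype.mem_piFinset.2 fun l => mem_insert_self _ _)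
  have hneighbour : ∀ l, ∀ a ∈ Γ l, update β l a ∘ b ∈ T.erase (β ∘ b) := by
    intro l a ha
    refine mem_erase.2 ⟨hbs.injective_comp_right.ne fun h => hβΓ l ?_, mem_image_of_mem _ ?_⟩
    · simpa [← congrFun h l] using ha
    · refine Fintype.mem_piFinset.2 fun k => ?_
      rcases eq_or_ne k l with rfl | hk
      · simp [ha]
      · simp [update_of_ne hk]
  have hinter : ⋂ t ∈ insert (β ∘ b) (T.erase (β ∘ b)), S t = ⋂ t ∈ T.erase (β ∘ b), S t := by
    rw [set_biInter_insert]
    refine Set.inter_eq_right.2 (subset_trans ?_ hsub)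
    exact Set.subset_iInter₂ fun l a => Set.subset_iInter fun ha =>
      Set.biInter_subset_of_mem (hneighbour l a ha)
  obtain ⟨a, ha⟩ := hΓ ⟨0, hℓ⟩
  refine ⟨T.erase (β ∘ b), β ∘ b, ⟨_, hneighbour _ a ha⟩, notMem_erase _ _, ?_, hinter,
    fun hind => (hP _).2.ne
      (hind.measure_eq_one_of_biInter_insert_eq (notMem_erase _ _) (fun t _ => (hP t).1.ne')
        hinter)⟩
  rw [insert_erase hβT]
  exact sepIndexSet_image_comp_piFinset hbs hℓ fun l => by
    rw [card_insert_of_notMem (hβΓ l)]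
    exact Nat.lt_add_of_pos_left (hΓ l).card_pos

theorem stmt16 {A Ω : Type*} [Fintype A] [DecidableEq A] [MeasurableSpace Ω]
    (hA : 2 ≤ Fintype.card A) {n ℓ : ℕ} (hℓ : 0 < ℓ) (hn : ℓ ≤ n)
    (r : Fin ℓ → ℕ) (hr : ∀ l, 0 < r l) (hrsum : ∑ l, r l = n)
    (P : Measure Ω) [IsProbabilityMeasure P]
    (S : (Fin n → A) → Set Ω) (hmeas : ∀ t, MeasurableSet (S t))
    (hS : IsSimplicial r S) (hP : ∀ t, 0 < P (S t) ∧ P (S t) < 1) :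
    ∃ (G : Finset (Fin n → A)) (x : Fin n → A), G.Nonempty ∧ x ∉ G ∧
      sepIndexSet (insert x G) = ℓ ∧
      (⋂ t ∈ insert x G, S t) = (⋂ t ∈ G, S t) ∧
      ¬ ProbabilityTheory.iIndepSet S P :=
  stmt16_general hℓ r hr hrsum P S hS hP
end

section
/- Let A be a finite set with |A| ≥ 2, n a positive integer, V an n-dimensional combinatorial space of A^{<ℕ} with canonical isomorphism I_V : A^n → V, and p ≥ 2 with p ≤ |A|^n. Then for every tuple (t₁,…,t_p) of distinct elements of A^n: τ((t₁,…,t_p)) = τ((I_V(t₁),…,I_V(t_p))) and s((t₁,…,t_p)) = s((I_V(t₁),…,I_V(t_p))); consequently, for every nonempty G ⊆ A^n, τ(G) = τ(I_V(G)) and s(G) = s(I_V(G)). -/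
/-- Two nonempty finite sets have the same type if they admit enumerations whose
tuple-types coincide. -/
def SameType {A : Type*} [DecidableEq A] {n m : ℕ}
    (G₁ : Finset (Fin n → A)) (G₂ : Finset (Fin m → A)) : Prop :=
  ∃ (p : ℕ) (t₁ : Fin p → Fin n → A) (t₂ : Fin p → Fin m → A),
    Function.Injective t₁ ∧ Function.Injective t₂ ∧
    (∀ x, x ∈ G₁ ↔ ∃ j, t₁ j = x) ∧ (∀ x, x ∈ G₂ ↔ ∃ j, t₂ j = x) ∧
    typeRows t₁ = typeRows t₂

/-- The separation index of a tuple: the least positive `ℓ` for which it is `ℓ`-separated. -/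
noncomputable def sepIndexTuple {A : Type*} {n p : ℕ} (t : Fin p → Fin n → A) : ℕ :=
  sInf {ℓ | 0 < ℓ ∧ SepTuple ℓ t}

/-- An `r`-variable word over `A` of length `n`: every variable appears, and the
appearances of the variables come in increasing order. -/
def IsVarWordM {A : Type*} {n r : ℕ} (w : Fin n → A ⊕ Fin r) : Prop :=
  (∀ l : Fin r, ∃ i, w i = Sum.inr l) ∧
    ∀ (i i' : Fin n) (l l' : Fin r),
      w i = Sum.inr l → w i' = Sum.inr l' → l < l' → i < i'

/-- The canonical isomorphism of the combinatorial space generated by an `r`-variable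
word `w`: substitute `z l` for the variable `x_l`. -/
def embW {A : Type*} {n r : ℕ} (w : Fin n → A ⊕ Fin r) (z : Fin r → A) : Fin n → A :=
  fun i => Sum.elim id z (w i)

namespace List

variable {α β : Type*} [DecidableEq α] [DecidableEq β]

private lemma exists_destutter'_map (f : α → β) :
    ∀ (l : List α) (a : α), ∃ r : List α,
      l.destutter' (· ≠ ·) a = a :: r ∧
      (r.map f).destutter' (· ≠ ·) (f a) = (l.map f).destutter' (· ≠ ·) (f a)
  | [], a => ⟨[], by simp⟩
  | b :: l, a => by
    by_cases hab : a = b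
    · obtain ⟨r, h₁, h₂⟩ := exists_destutter'_map f l a
      refine ⟨r, ?_, ?_⟩
      · rw [destutter'_cons_neg _ (by simp [hab]), h₁]
      · rw [map_cons, destutter'_cons_neg _ (by simp [hab]), h₂]
    · obtain ⟨r, h₁, h₂⟩ := exists_destutter'_map f l b
      refine ⟨b :: r, by rw [destutter'_cons_pos _ hab, h₁], ?_⟩
      by_cases hfab : f a = f b
      · rw [map_cons, destutter'_cons_neg _ (by simp [hfab]), map_cons,
          destutter'_cons_neg _ (by simp [hfab]), hfab, h₂]
      · rw [map_cons, destutter'_cons_pos _ hfab, map_cons, destutter'_cons_pos _ hfab, h₂]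

theorem destutter_map_destutter (f : α → β) (l : List α) :
    ((l.destutter (· ≠ ·)).map f).destutter (· ≠ ·) = (l.map f).destutter (· ≠ ·) := by
  cases l with
  | nil => rfl
  | cons a l =>
    obtain ⟨r, h₁, h₂⟩ := exists_destutter'_map f l a
    rw [map_cons, destutter_cons', destutter_cons', h₁, map_cons, destutter_cons', h₂]

end List

def varLabels {A : Type*} {N n : ℕ} (w : Fin N → A ⊕ Fin n) : List (Fin n) :=
  (List.finRange N).filterMap fun i => (w i).getRight?

section VarWord

variable {A : Type*} {N n : ℕ} {w : Fin N → A ⊕ Fin n}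

theorem IsVarWordM.pairwise_varLabels (hw : IsVarWordM w) :
    (varLabels w).Pairwise (· ≤ ·) := by
  refine (List.pairwise_lt_finRange N).filterMap _ fun i i' hii' l hl l' hl' => ?_
  rw [Sum.getRight?_eq_some_iff] at hl hl'
  by_contra! hlt
  exact absurd (hw.2 i' i l' l hl' hl hlt) (not_lt.2 hii'.le)

theorem mem_varLabels_of_surjective (hw : ∀ l, ∃ i, w i = Sum.inr l) (l : Fin n) :
    l ∈ varLabels w := by
  obtain ⟨i, hi⟩ := hw l
  exact List.mem_filterMap.2 ⟨i, List.mem_finRange i, by simp [hi]⟩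

theorem IsVarWordM.destutter_filter_varLabels (hw : IsVarWordM w) (q : Fin n → Bool) :
    ((varLabels w).filter q).destutter (· ≠ ·) = (List.finRange n).filter q := by
  have hsorted : ((varLabels w).filter q).Pairwise (· ≤ ·) :=
    hw.pairwise_varLabels.sublist List.filter_sublist
  rw [hsorted.destutter_eq_dedup]
  refine List.Pairwise.eq_of_mem_iff (r := (· < ·)) ?_
    ((List.pairwise_lt_finRange n).sublist List.filter_sublist) fun l => ?_
  · exact ((hsorted.sublist (List.dedup_sublist _)).and (List.nodup_dedup _)).imp
      fun h => lt_of_le_of_ne h.1 h.2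
  · simp [List.mem_dedup, mem_varLabels_of_surjective hw.1]

end VarWord

theorem typeRows_embW {A : Type*} [DecidableEq A] {N n p : ℕ} {w : Fin N → A ⊕ Fin n}
    (hw : IsVarWordM w) (t : Fin p → Fin n → A) :
    typeRows (fun j => embW w (t j)) = typeRows t := by
  set P : (Fin p → A) → Bool := fun r => decide (∃ j j' : Fin p, r j ≠ r j')
  set row : Fin n → Fin p → A := fun l j => t j l
  have hrows : ∀ L : List (Fin N),
      (L.map fun i j => embW w (t j) i).filter P
        = ((L.filterMap fun i => (w i).getRight?).map row).filter P := by
    intro L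
    induction L with
    | nil => rfl
    | cons i L ih =>
      cases h : w i with
      | inl a =>
        rw [List.map_cons, List.filterMap_cons_none (by simp [h]), List.filter_cons_of_neg
          (by simp [P, embW, h]), ih]
      | inr l =>
        have hrow : (fun j => embW w (t j) i) = row l := by simp [embW, h, row]
        rw [List.map_cons,
          List.filterMap_cons_some (f := fun i => (w i).getRight?) (b := l) (by simp [h]),
          List.map_cons, hrow, List.filter_cons, List.filter_cons, ih]
  calc typeRows (fun j => embW w (t j))
      = (((varLabels w).map row).filter P).destutter (· ≠ ·) := by
        rw [typeRows, hrows, varLabels]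
    _ = ((((varLabels w).filter (P ∘ row)).destutter (· ≠ ·)).map row).destutter (· ≠ ·) := by
        rw [List.filter_map, List.destutter_map_destutter]
    _ = typeRows t := by
        rw [hw.destutter_filter_varLabels, ← List.filter_map]
        rfl

theorem Nat.sInf_eq_sInf_of_subset_of_forall_exists_le {S T : Set ℕ} (hST : S ⊆ T)
    (hTS : ∀ b ∈ T, ∃ a ∈ S, a ≤ b) : sInf S = sInf T := by
  rcases T.eq_empty_or_nonempty with rfl | hT
  · rw [Set.subset_empty_iff.1 hST]
  obtain ⟨a, haS, ha⟩ := hTS _ (Nat.sInf_mem hT)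
  exact le_antisymm ((Nat.sInf_le haS).trans ha) (Nat.sInf_le (hST (Nat.sInf_mem ⟨a, haS⟩)))

section Separation

variable {A : Type*} {N n p : ℕ} {w : Fin N → A ⊕ Fin n}

theorem SepTuple.comp_embW (hw : ∀ l, ∃ i, w i = Sum.inr l) {ℓ : ℕ} {t : Fin p → Fin n → A}
    (h : SepTuple ℓ t) : SepTuple ℓ (fun j => embW w (t j)) := by
  choose σ hσ using hw
  have hσ_inj : Function.Injective σ := fun l l' hll' =>
    Sum.inr_injective ((hσ l).symm.trans (hll' ▸ hσ l'))
  intro j hj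
  obtain ⟨I, hI, hsep⟩ := h j hj
  refine ⟨I.image σ, by rw [Finset.card_image_of_injective _ hσ_inj, hI], fun q hq => ?_⟩
  obtain ⟨l, hlI, hne⟩ := hsep q hq
  exact ⟨σ l, Finset.mem_image_of_mem σ hlI, by simpa [embW, hσ l] using hne⟩

/-- Only variable positions can separate images under `embW w`, so the variables met by a
separating set of positions separate the original tuple. -/
theorem SepTuple.of_comp_embW {ℓ : ℕ} {t : Fin p → Fin n → A}
    (h : SepTuple ℓ (fun j => embW w (t j))) : SepTuple (min ℓ n) t := by
  intro j hj
  obtain ⟨I', hI', hsep⟩ := h j hj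
  set I₀ : Finset (Fin n) := (I'.image fun i => (w i).getRight?).eraseNone
  have hI₀ : I₀.card ≤ min ℓ n :=
    le_min ((Finset.card_eraseNone_le _).trans (hI' ▸ Finset.card_image_le))
      (by simpa using Finset.card_le_univ I₀)
  obtain ⟨I, hI₀I, -, hI⟩ := Finset.exists_subsuperset_card_eq
    (Finset.subset_univ I₀) hI₀ (by simp)
  refine ⟨I, hI, fun q hq => ?_⟩
  obtain ⟨i, hiI', hne⟩ := hsep q hq
  cases hwi : w i with
  | inl a => simp [embW, hwi] at hne
  | inr l =>
    refine ⟨l, hI₀I ?_, by simpa [embW, hwi] using hne⟩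
    exact Finset.mem_eraseNone.2 (Finset.mem_image.2 ⟨i, hiI', by simp [hwi]⟩)

theorem sepIndexTuple_embW (hw : ∀ l, ∃ i, w i = Sum.inr l) (hn : 0 < n)
    (t : Fin p → Fin n → A) : sepIndexTuple (fun j => embW w (t j)) = sepIndexTuple t := by
  symm
  refine Nat.sInf_eq_sInf_of_subset_of_forall_exists_le (fun ℓ hℓ => ?_) fun ℓ hℓ => ?_
  · exact ⟨hℓ.1, hℓ.2.comp_embW hw⟩
  · exact ⟨min ℓ n, ⟨lt_min hℓ.1 hn, hℓ.2.of_comp_embW⟩, min_le_left ℓ n⟩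

theorem embW_injective (hw : ∀ l, ∃ i, w i = Sum.inr l) : Function.Injective (embW w) :=
  fun z z' h => funext fun l => by
    obtain ⟨i, hi⟩ := hw l
    simpa [embW, hi] using congrFun h i

variable [DecidableEq A]

theorem sepIndexSet_image_embW (hw : ∀ l, ∃ i, w i = Sum.inr l) (hn : 0 < n)
    (G : Finset (Fin n → A)) : sepIndexSet (G.image (embW w)) = sepIndexSet G := by
  have hinj := embW_injective hw
  rw [sepIndexSet, sepIndexSet, Finset.card_image_of_injective G hinj]
  symm
  refine Nat.sInf_eq_sInf_of_subset_of_forall_exists_le ?_ ?_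
  · rintro ℓ ⟨hℓ, t, ht, htG, hsep⟩
    exact ⟨hℓ, _, hinj.comp ht, fun j => Finset.mem_image_of_mem _ (htG j), hsep.comp_embW hw⟩
  · rintro ℓ ⟨hℓ, t', ht', ht'G, hsep⟩
    choose t htG ht using fun j => Finset.mem_image.1 (ht'G j)
    obtain rfl : (fun j => embW w (t j)) = t' := funext ht
    exact ⟨min ℓ n, ⟨lt_min hℓ hn, t, Function.Injective.of_comp (f := embW w) ht', htG,
      hsep.of_comp_embW⟩, min_le_left ℓ n⟩

theorem sameType_image_embW (hw : IsVarWordM w) (G : Finset (Fin n → A)) :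
    SameType G (G.image (embW w)) := by
  set t : Fin G.card → Fin n → A := fun j => G.equivFin.symm j
  have ht : Function.Injective t := Subtype.val_injective.comp G.equivFin.symm.injective
  have hmem : ∀ x, x ∈ G ↔ ∃ j, t j = x := fun x =>
    ⟨fun hx => ⟨G.equivFin ⟨x, hx⟩, by simp [t]⟩, by rintro ⟨j, rfl⟩; exact (G.equivFin.symm j).2⟩
  refine ⟨G.card, t, _, ht, (embW_injective hw.1).comp ht, hmem, fun x => ?_,
    (typeRows_embW hw t).symm⟩
  simp [hmem]

end Separation

theorem stmt19_general {A : Type*} [DecidableEq A]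
    {n N p : ℕ} (hn : 0 < n)
    (w : Fin N → A ⊕ Fin n) (hw : IsVarWordM w) :
    (∀ t : Fin p → Fin n → A, Function.Injective t →
      typeRows (fun j => embW w (t j)) = typeRows t ∧
      sepIndexTuple (fun j => embW w (t j)) = sepIndexTuple t) ∧
    (∀ G : Finset (Fin n → A), G.Nonempty →
      SameType G (Finset.image (embW w) G) ∧
      sepIndexSet (Finset.image (embW w) G) = sepIndexSet G) :=
  ⟨fun t _ => ⟨typeRows_embW hw t, sepIndexTuple_embW hw.1 hn t⟩,
    fun G _ => ⟨sameType_image_embW hw G, sepIndexSet_image_embW hw.1 hn G⟩⟩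

theorem stmt19 {A : Type*} [Fintype A] [DecidableEq A]
    (hA : 2 ≤ Fintype.card A) {n N p : ℕ} (hn : 0 < n)
    (hp : 2 ≤ p) (hpc : p ≤ Fintype.card A ^ n)
    (w : Fin N → A ⊕ Fin n) (hw : IsVarWordM w) :
    (∀ t : Fin p → Fin n → A, Function.Injective t →
      typeRows (fun j => embW w (t j)) = typeRows t ∧
      sepIndexTuple (fun j => embW w (t j)) = sepIndexTuple t) ∧
    (∀ G : Finset (Fin n → A), G.Nonempty →
      SameType G (Finset.image (embW w) G) ∧
      sepIndexSet (Finset.image (embW w) G) = sepIndexSet G) :=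
  stmt19_general hn w hw
end
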